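/- arXiv:2012.15775 — 3 statements merged into one kernel-verified Lean document; each statement's English description precedes it below -/
import Mathlib

section
/- For every square-free 2-matching M of G there exists an (l,u)-matching M' of the auxiliary graph G' with w'(M') = w(M). -/
open Finset
open scoped Classical

namespace Paper

variable {V : Type*}

/-- `t` is the vertex set of a triangle (cycle of length 3) of `G`. -/
def IsTriangle (G : SimpleGraph V) (t : Finset V) : Prop :=
  t.card = 3 ∧ ∀ x ∈ t, ∀ y ∈ t, x ≠ y → G.Adj x y

/-- The (three) edges of a triangle with vertex set `t`. -/
def triEdges [DecidableEq V] (t : Finset V) : Finset (Sym2 V) :=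
  t.sym2.filter (fun e => ¬ e.IsDiag)

/-- Some connected component of `G` is isomorphic to the complete graph `K₄`:
there are four pairwise distinct, pairwise adjacent vertices that have no
neighbours outside of these four vertices. -/
def HasK4Component (G : SimpleGraph V) : Prop :=
  ∃ a b c d : V, a ≠ b ∧ a ≠ c ∧ a ≠ d ∧ b ≠ c ∧ b ≠ d ∧ c ≠ d ∧
    G.Adj a b ∧ G.Adj a c ∧ G.Adj a d ∧ G.Adj b c ∧ G.Adj b d ∧ G.Adj c d ∧
    ∀ x y : V, (x = a ∨ x = b ∨ x = c ∨ x = d) → G.Adj x y →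
      (y = a ∨ y = b ∨ y = c ∨ y = d)

/-- The degree of the vertex `v` in the edge set `M`, i.e. the number of edges
of `M` incident to `v`. -/
noncomputable def degIn (M : Finset (Sym2 V)) (v : V) : ℕ :=
  (M.filter (fun e => v ∈ e)).card

/-- `M` is a 2-matching of `G`: a set of edges of `G` such that every vertex is
incident to at most two of its edges. -/
def Is2Matching (G : SimpleGraph V) (M : Finset (Sym2 V)) : Prop :=
  (∀ e ∈ M, e ∈ G.edgeSet) ∧ ∀ v : V, degIn M v ≤ 2

/-- No triangle of `G` has all three of its edges in `M`. -/
def TriangleFree [DecidableEq V] (G : SimpleGraph V) (M : Finset (Sym2 V)) : Prop :=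
  ∀ t : Finset V, IsTriangle G t → ¬ triEdges t ⊆ M

/-- The triangle `t` is unproblematic: some other triangle `t'` shares an edge
with `t` and `w(t) ≤ w(t')`. -/
def TriUnprob [DecidableEq V] (G : SimpleGraph V) (w : Sym2 V → ℝ) (t : Finset V) : Prop :=
  ∃ t' : Finset V, IsTriangle G t' ∧ t' ≠ t ∧ (triEdges t ∩ triEdges t').Nonempty ∧
    ∑ e ∈ triEdges t, w e ≤ ∑ e ∈ triEdges t', w e

/-- The triangle `t` is problematic. -/
def ProblemTri [DecidableEq V] (G : SimpleGraph V) (w : Sym2 V → ℝ) (t : Finset V) : Prop :=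
  IsTriangle G t ∧ ¬ TriUnprob G w t

/-- `(a, b, c, d)` is a square (cycle of length 4) of `G`. -/
def IsSquare4 (G : SimpleGraph V) (a b c d : V) : Prop :=
  a ≠ b ∧ a ≠ c ∧ a ≠ d ∧ b ≠ c ∧ b ≠ d ∧ c ≠ d ∧
  G.Adj a b ∧ G.Adj b c ∧ G.Adj c d ∧ G.Adj d a

/-- The four native edges of the square `(a, b, c, d)`. -/
def sqEdges [DecidableEq V] (a b c d : V) : Finset (Sym2 V) :=
  {s(a, b), s(b, c), s(c, d), s(d, a)}

/-- No square of `G` has all four of its native edges in `M`. -/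
def SquareFree [DecidableEq V] (G : SimpleGraph V) (M : Finset (Sym2 V)) : Prop :=
  ∀ a b c d : V, IsSquare4 G a b c d → ¬ sqEdges a b c d ⊆ M

/-- The square `(a, b, c, d)` is unproblematic: there is another square `s'`
such that either they share exactly one edge, or they share two edges and
`w(s) ≤ w(s')`. -/
def SqUnprob [DecidableEq V] (G : SimpleGraph V) (w : Sym2 V → ℝ) (a b c d : V) : Prop :=
  ∃ a' b' c' d' : V, IsSquare4 G a' b' c' d' ∧ sqEdges a' b' c' d' ≠ sqEdges a b c d ∧
    ((sqEdges a b c d ∩ sqEdges a' b' c' d').card = 1 ∨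
     ((sqEdges a b c d ∩ sqEdges a' b' c' d').card = 2 ∧
       ∑ e ∈ sqEdges a b c d, w e ≤ ∑ e ∈ sqEdges a' b' c' d', w e))

/-- The square `(a, b, c, d)` is problematic. -/
def ProblemSq [DecidableEq V] (G : SimpleGraph V) (w : Sym2 V → ℝ) (a b c d : V) : Prop :=
  IsSquare4 G a b c d ∧ ¬ SqUnprob G w a b c d

/-- The new vertices of the auxiliary graph `G'` for the square-free
2-matching problem: `sub p q` is the subdivision vertex `v^p_q`, and
`globS P N` is the global vertex of the problematic square with native edge
set `N` associated with the pair `P` of opposite vertices (`u_s^1` for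
`P = {a, c}` and `u_s^2` for `P = {b, d}`). -/
inductive NVS (V : Type*) where
  | sub : V → V → NVS V
  | globS : Finset V → Finset (Sym2 V) → NVS V

section SqAux

variable [DecidableEq V] (G : SimpleGraph V) (w : Sym2 V → ℝ)

/-- `e` is a native edge of some problematic square of `G`. -/
def InPSq (e : Sym2 V) : Prop :=
  ∃ a b c d : V, ProblemSq G w a b c d ∧ e ∈ sqEdges a b c d

/-- `globS P N` is a global vertex of a problematic square: `N` is the native
edge set of a problematic square `(a, b, c, d)` and `P` is one of the pairs
`{a, c}`, `{b, d}` of opposite vertices. -/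
def SqGlobMean (P : Finset V) (N : Finset (Sym2 V)) : Prop :=
  ∃ a b c d : V, ProblemSq G w a b c d ∧ N = sqEdges a b c d ∧
    (P = {a, c} ∨ P = {b, d})

/-- The weight `r_p` of the half-edges of a problematic square incident to `p`
(`q` being the other endpoint of the subdivided native edge), given a choice
`ρ` of potentials for each square, indexed by its native edge set. -/
noncomputable def sqHalfW (ρ : Finset (Sym2 V) → V → ℝ) (p q : V) : ℝ :=
  if h : ∃ N : Finset (Sym2 V),
      (∃ a b c d : V, ProblemSq G w a b c d ∧ N = sqEdges a b c d) ∧ s(p, q) ∈ N then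
    ρ h.choose p
  else 0

/-- The base adjacency relation of the auxiliary graph `G'`: edges of `G` that
are not native edges of a problematic square are kept (in particular,
diagonals of squares are not modified); each native edge `(p, q)` of a
problematic square is replaced by the half-edges `(p, v^p_q)`, `(q, v^q_p)`
and the eliminator `(v^p_q, v^q_p)`; for a problematic square
`s = (a, b, c, d)` the global vertex `u_s^1` is joined to the four
subdivision vertices adjacent to `a` or `c`, and `u_s^2` to the four
subdivision vertices adjacent to `b` or `d`. -/
def sqRel : V ⊕ NVS V → V ⊕ NVS V → Prop
  | Sum.inl x, Sum.inl y => G.Adj x y ∧ ¬ InPSq G w s(x, y)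
  | Sum.inl p, Sum.inr (NVS.sub p' q) => p = p' ∧ InPSq G w s(p', q)
  | Sum.inr (NVS.sub p q), Sum.inr (NVS.sub p' q') => p = q' ∧ q = p' ∧ InPSq G w s(p, q)
  | Sum.inr (NVS.globS P N), Sum.inr (NVS.sub p q) =>
      SqGlobMean G w P N ∧ p ∈ P ∧ s(p, q) ∈ N
  | _, _ => False

/-- The auxiliary graph `G'` for the square-free 2-matching problem. -/
def sqAuxG : SimpleGraph (V ⊕ NVS V) := SimpleGraph.fromRel (sqRel G w)

/-- One-sided weight function on ordered pairs of vertices of `G'`: kept edges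
of `G` get weight `w`, the half-edge `(p, v^p_q)` gets weight `r_p`, and all
other edges (eliminators, edges at global vertices) get weight `0`. (It is
symmetrized in `sqW` below.) -/
noncomputable def sqWbase (ρ : Finset (Sym2 V) → V → ℝ) : V ⊕ NVS V → V ⊕ NVS V → ℝ
  | Sum.inl x, Sum.inl y => w s(x, y) / 2
  | Sum.inl p, Sum.inr (NVS.sub p' q) => if p = p' then sqHalfW G w ρ p q else 0
  | _, _ => 0

/-- The weight function `w'` of the auxiliary graph `G'`. -/
noncomputable def sqW (ρ : Finset (Sym2 V) → V → ℝ) : Sym2 (V ⊕ NVS V) → ℝ :=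
  Sym2.lift ⟨fun x y => sqWbase G w ρ x y + sqWbase G w ρ y x,
    fun _ _ => add_comm _ _⟩

/-- The actual vertices of `G'`: all vertices of `G` together with the gadget
vertices of the problematic squares. -/
def sqMeaning : V ⊕ NVS V → Prop
  | Sum.inl _ => True
  | Sum.inr (NVS.sub p q) => InPSq G w s(p, q)
  | Sum.inr (NVS.globS P N) => SqGlobMean G w P N

/-- Lower capacities: `l(v) = 0` for `v ∈ V` and `l(v) = 1` for new vertices. -/
def sqLowCap : V ⊕ NVS V → ℕ
  | Sum.inl _ => 0
  | Sum.inr _ => 1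

/-- Upper capacities: `u(v) = 2` for `v ∈ V` and `u(v) = 1` for new vertices. -/
def sqUpCap : V ⊕ NVS V → ℕ
  | Sum.inl _ => 2
  | Sum.inr _ => 1

/-- `M'` is an `(l,u)`-matching of the auxiliary graph `G'`. -/
def SqLU (M' : Finset (Sym2 (V ⊕ NVS V))) : Prop :=
  (∀ e ∈ M', e ∈ (sqAuxG G w).edgeSet) ∧
  ∀ v : V ⊕ NVS V, sqMeaning G w v →
    sqLowCap v ≤ degIn M' v ∧ degIn M' v ≤ sqUpCap v

end SqAux

/-! ### Auxiliary lemmas for the proof -/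

section ProofAux

variable [DecidableEq V] (G : SimpleGraph V) (w : Sym2 V → ℝ)

lemma sqEdges_mem_cases {a b c d : V} {e : Sym2 V} (he : e ∈ sqEdges a b c d) :
    e = s(a,b) ∨ e = s(b,c) ∨ e = s(c,d) ∨ e = s(d,a) := by
  simpa [sqEdges, Finset.mem_insert] using he

lemma mem_sqEdges_self₁ (a b c d : V) : s(a,b) ∈ sqEdges a b c d := by simp [sqEdges]
lemma mem_sqEdges_self₂ (a b c d : V) : s(b,c) ∈ sqEdges a b c d := by simp [sqEdges]
lemma mem_sqEdges_self₃ (a b c d : V) : s(c,d) ∈ sqEdges a b c d := by simp [sqEdges]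
lemma mem_sqEdges_self₄ (a b c d : V) : s(d,a) ∈ sqEdges a b c d := by simp [sqEdges]

lemma sqEdges_vertex {a b c d x : V} {e : Sym2 V} (he : e ∈ sqEdges a b c d) (hx : x ∈ e) :
    x = a ∨ x = b ∨ x = c ∨ x = d := by
  rcases sqEdges_mem_cases he with h|h|h|h <;> subst h <;>
    rcases Sym2.mem_iff.1 hx with h|h <;> tauto

lemma sqEdges_endpoints {a b c d p q : V} (hs : IsSquare4 G a b c d)
    (he : s(p,q) ∈ sqEdges a b c d) :
    G.Adj p q ∧ (p = a ∨ p = b ∨ p = c ∨ p = d) ∧ (q = a ∨ q = b ∨ q = c ∨ q = d) := by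
  obtain ⟨hab, hac, had, hbc, hbd, hcd, Gab, Gbc, Gcd, Gda⟩ := hs
  rcases sqEdges_mem_cases he with h|h|h|h <;>
    rw [Sym2.eq_iff] at h <;>
    rcases h with ⟨rfl, rfl⟩|⟨rfl, rfl⟩
  · exact ⟨Gab, Or.inl rfl, Or.inr (Or.inl rfl)⟩
  · exact ⟨Gab.symm, Or.inr (Or.inl rfl), Or.inl rfl⟩
  · exact ⟨Gbc, Or.inr (Or.inl rfl), Or.inr (Or.inr (Or.inl rfl))⟩
  · exact ⟨Gbc.symm, Or.inr (Or.inr (Or.inl rfl)), Or.inr (Or.inl rfl)⟩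
  · exact ⟨Gcd, Or.inr (Or.inr (Or.inl rfl)), Or.inr (Or.inr (Or.inr rfl))⟩
  · exact ⟨Gcd.symm, Or.inr (Or.inr (Or.inr rfl)), Or.inr (Or.inr (Or.inl rfl))⟩
  · exact ⟨Gda, Or.inr (Or.inr (Or.inr rfl)), Or.inl rfl⟩
  · exact ⟨Gda.symm, Or.inl rfl, Or.inr (Or.inr (Or.inr rfl))⟩

lemma diag_not_mem₁ {a b c d : V} (hs : IsSquare4 G a b c d) :
    s(a,c) ∉ sqEdges a b c d := by
  obtain ⟨hab, hac, had, hbc, hbd, hcd, -⟩ := hs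
  intro h
  rcases sqEdges_mem_cases h with h|h|h|h <;> rw [Sym2.eq_iff] at h <;> tauto

lemma diag_not_mem₂ {a b c d : V} (hs : IsSquare4 G a b c d) :
    s(b,d) ∉ sqEdges a b c d := by
  obtain ⟨hab, hac, had, hbc, hbd, hcd, -⟩ := hs
  intro h
  rcases sqEdges_mem_cases h with h|h|h|h <;> rw [Sym2.eq_iff] at h <;> tauto

lemma sqEdges_card {a b c d : V} (hs : IsSquare4 G a b c d) :
    (sqEdges a b c d).card = 4 := by
  obtain ⟨hab, hac, had, hbc, hbd, hcd, -⟩ := hs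
  have h1 : (s(a,b) : Sym2 V) ∉ ({s(b,c), s(c,d), s(d,a)} : Finset (Sym2 V)) := by
    simp only [Finset.mem_insert, Finset.mem_singleton, Sym2.eq_iff]; tauto
  have h2 : (s(b,c) : Sym2 V) ∉ ({s(c,d), s(d,a)} : Finset (Sym2 V)) := by
    simp only [Finset.mem_insert, Finset.mem_singleton, Sym2.eq_iff]; tauto
  have h3 : (s(c,d) : Sym2 V) ∉ ({s(d,a)} : Finset (Sym2 V)) := by
    simp only [Finset.mem_singleton, Sym2.eq_iff]; tauto
  rw [sqEdges, Finset.card_insert_of_notMem h1, Finset.card_insert_of_notMem h2,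
    Finset.card_insert_of_notMem h3, Finset.card_singleton]

set_option maxHeartbeats 1000000 in
lemma two_edges_at_vertex {a b c d x : V} (hs : IsSquare4 G a b c d) {e1 e2 e3 : Sym2 V}
    (h1 : e1 ∈ sqEdges a b c d) (h2 : e2 ∈ sqEdges a b c d) (h3 : e3 ∈ sqEdges a b c d)
    (hx1 : x ∈ e1) (hx2 : x ∈ e2) (hx3 : x ∈ e3) : e1 = e2 ∨ e1 = e3 ∨ e2 = e3 := by
  obtain ⟨hab, hac, had, hbc, hbd, hcd, -⟩ := hs
  have key : ∃ u v : Sym2 V, ∀ e ∈ sqEdges a b c d, x ∈ e → e = u ∨ e = v := by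
    by_cases hx : x = a ∨ x = b ∨ x = c ∨ x = d
    · rcases hx with rfl|rfl|rfl|rfl
      · refine ⟨s(x,b), s(d,x), fun e he hxe => ?_⟩
        rcases sqEdges_mem_cases he with rfl|rfl|rfl|rfl <;>
          rw [Sym2.mem_iff] at hxe <;>
          first | (exact Or.inl rfl) | (exact Or.inr rfl) | tauto
      · refine ⟨s(a,x), s(x,c), fun e he hxe => ?_⟩
        rcases sqEdges_mem_cases he with rfl|rfl|rfl|rfl <;>
          rw [Sym2.mem_iff] at hxe <;>
          first | (exact Or.inl rfl) | (exact Or.inr rfl) | tauto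
      · refine ⟨s(b,x), s(x,d), fun e he hxe => ?_⟩
        rcases sqEdges_mem_cases he with rfl|rfl|rfl|rfl <;>
          rw [Sym2.mem_iff] at hxe <;>
          first | (exact Or.inl rfl) | (exact Or.inr rfl) | tauto
      · refine ⟨s(c,x), s(x,a), fun e he hxe => ?_⟩
        rcases sqEdges_mem_cases he with rfl|rfl|rfl|rfl <;>
          rw [Sym2.mem_iff] at hxe <;>
          first | (exact Or.inl rfl) | (exact Or.inr rfl) | tauto
    · exact ⟨s(a,b), s(a,b), fun e he hxe => absurd (sqEdges_vertex he hxe) hx⟩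
  obtain ⟨u, v, k⟩ := key
  rcases k e1 h1 hx1 with rfl|rfl <;> rcases k e2 h2 hx2 with rfl|rfl <;>
    rcases k e3 h3 hx3 with rfl|rfl <;> tauto

lemma exists_two_edges {a b c d x : V} (hs : IsSquare4 G a b c d)
    (hx : x = a ∨ x = b ∨ x = c ∨ x = d) :
    ∃ e1 e2 : Sym2 V, e1 ∈ sqEdges a b c d ∧ e2 ∈ sqEdges a b c d ∧ e1 ≠ e2 ∧
      x ∈ e1 ∧ x ∈ e2 := by
  obtain ⟨hab, hac, had, hbc, hbd, hcd, -⟩ := hs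
  rcases hx with rfl|rfl|rfl|rfl
  · exact ⟨s(x,b), s(d,x), mem_sqEdges_self₁ .., mem_sqEdges_self₄ .., by
      rw [Ne, Sym2.eq_iff]; tauto, by simp, by simp⟩
  · exact ⟨s(a,x), s(x,c), mem_sqEdges_self₁ .., mem_sqEdges_self₂ .., by
      rw [Ne, Sym2.eq_iff]; tauto, by simp, by simp⟩
  · exact ⟨s(b,x), s(x,d), mem_sqEdges_self₂ .., mem_sqEdges_self₃ .., by
      rw [Ne, Sym2.eq_iff]; tauto, by simp, by simp⟩
  · exact ⟨s(c,x), s(x,a), mem_sqEdges_self₃ .., mem_sqEdges_self₄ .., by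
      rw [Ne, Sym2.eq_iff]; tauto, by simp, by simp⟩

lemma sym2_eq_of_two_mem {x y : V} {e : Sym2 V} (hxy : x ≠ y) (hx : x ∈ e) (hy : y ∈ e) :
    e = s(x,y) := by
  induction e using Sym2.inductionOn with
  | hf u v =>
    rcases Sym2.mem_iff.1 hx with rfl|rfl <;> rcases Sym2.mem_iff.1 hy with rfl|rfl <;>
      first | (exact absurd rfl hxy) | rfl | (exact Sym2.eq_swap)

lemma pair_det {a b c d x y : V} (hs : IsSquare4 G a b c d)
    (hx : x = a ∨ x = b ∨ x = c ∨ x = d) (hy : y = a ∨ y = b ∨ y = c ∨ y = d)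
    (hxy : x ≠ y) (hd : s(x,y) ∉ sqEdges a b c d) :
    ({x,y} : Finset V) = {a,c} ∨ ({x,y} : Finset V) = {b,d} := by
  obtain ⟨hab, hac, had, hbc, hbd, hcd, -⟩ := hs
  rcases hx with rfl|rfl|rfl|rfl <;> rcases hy with rfl|rfl|rfl|rfl <;>
    first
      | (exact absurd rfl hxy)
      | (exact Or.inl rfl)
      | (exact Or.inr rfl)
      | (exact Or.inl (Finset.pair_comm _ _))
      | (exact Or.inr (Finset.pair_comm _ _))
      | (simp [sqEdges, Sym2.eq_iff] at hd)

lemma edge_split {a b c d x y : V} (hs : IsSquare4 G a b c d)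
    (he : s(x,y) ∈ sqEdges a b c d) :
    ((x = a ∨ x = c) ∧ (y = b ∨ y = d)) ∨ ((x = b ∨ x = d) ∧ (y = a ∨ y = c)) := by
  obtain ⟨hab, hac, had, hbc, hbd, hcd, -⟩ := hs
  rcases sqEdges_mem_cases he with h|h|h|h <;> rw [Sym2.eq_iff] at h <;> tauto

lemma sqEdges_exists_repr {a b c d : V} {f : Sym2 V} (hs : IsSquare4 G a b c d)
    (hf : f ∈ sqEdges a b c d) : ∃ x y : V, x ≠ y ∧ f = s(x,y) := by
  obtain ⟨hab, hac, had, hbc, hbd, hcd, -⟩ := hs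
  rcases sqEdges_mem_cases hf with rfl|rfl|rfl|rfl
  · exact ⟨a, b, hab, rfl⟩
  · exact ⟨b, c, hbc, rfl⟩
  · exact ⟨c, d, hcd, rfl⟩
  · exact ⟨d, a, fun h => had h.symm, rfl⟩

/-- Distinct problematic squares are edge-disjoint. -/
lemma problem_disjoint {a b c d a' b' c' d' : V}
    (h : ProblemSq G w a b c d) (h' : ProblemSq G w a' b' c' d')
    (hne : sqEdges a b c d ≠ sqEdges a' b' c' d') :
    sqEdges a b c d ∩ sqEdges a' b' c' d' = ∅ := by
  by_contra hcon
  obtain ⟨hs, hnp⟩ := h; obtain ⟨hs', hnp'⟩ := h'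
  have hNc : (sqEdges a b c d).card = 4 := sqEdges_card G hs
  have hN'c : (sqEdges a' b' c' d').card = 4 := sqEdges_card G hs'
  have hpos : 0 < (sqEdges a b c d ∩ sqEdges a' b' c' d').card := by
    rcases Finset.eq_empty_or_nonempty (sqEdges a b c d ∩ sqEdges a' b' c' d') with h|h
    · exact absurd h hcon
    · exact Finset.card_pos.2 h
  have hle : (sqEdges a b c d ∩ sqEdges a' b' c' d').card ≤ 4 :=
    hNc ▸ Finset.card_le_card Finset.inter_subset_left
  have hcases : (sqEdges a b c d ∩ sqEdges a' b' c' d').card = 1 ∨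
      (sqEdges a b c d ∩ sqEdges a' b' c' d').card = 2 ∨
      (sqEdges a b c d ∩ sqEdges a' b' c' d').card = 3 ∨
      (sqEdges a b c d ∩ sqEdges a' b' c' d').card = 4 := by omega
  rcases hcases with hc|hc|hc|hc
  · exact hnp ⟨a', b', c', d', hs', hne.symm, Or.inl hc⟩
  · rcases le_total (∑ e ∈ sqEdges a b c d, w e) (∑ e ∈ sqEdges a' b' c' d', w e) with hw|hw
    · exact hnp ⟨a', b', c', d', hs', hne.symm, Or.inr ⟨hc, hw⟩⟩
    · exact hnp' ⟨a, b, c, d, hs, hne, Or.inr ⟨by rwa [Finset.inter_comm], hw⟩⟩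
  · -- three shared edges: the two squares coincide, contradiction
    have hd1 : (sqEdges a b c d \ sqEdges a' b' c' d').card = 1 := by
      have := Finset.card_inter_add_card_sdiff (sqEdges a b c d) (sqEdges a' b' c' d')
      omega
    have hd2 : (sqEdges a' b' c' d' \ sqEdges a b c d).card = 1 := by
      have := Finset.card_inter_add_card_sdiff (sqEdges a' b' c' d') (sqEdges a b c d)
      rw [Finset.inter_comm] at this
      omega
    obtain ⟨f, hf⟩ := Finset.card_eq_one.1 hd1
    obtain ⟨g, hg⟩ := Finset.card_eq_one.1 hd2
    have hfmem : f ∈ sqEdges a b c d ∧ f ∉ sqEdges a' b' c' d' := by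
      have : f ∈ sqEdges a b c d \ sqEdges a' b' c' d' := hf ▸ Finset.mem_singleton_self f
      exact Finset.mem_sdiff.1 this
    have hgmem : g ∈ sqEdges a' b' c' d' ∧ g ∉ sqEdges a b c d := by
      have : g ∈ sqEdges a' b' c' d' \ sqEdges a b c d := hg ▸ Finset.mem_singleton_self g
      exact Finset.mem_sdiff.1 this
    obtain ⟨x, y, hxy, rfl⟩ := sqEdges_exists_repr G hs hfmem.1
    -- every endpoint of f is in g
    have key : ∀ z, z ∈ (s(x,y) : Sym2 V) → z ∈ g := by
      intro z hz
      have hzv : z = a ∨ z = b ∨ z = c ∨ z = d := sqEdges_vertex hfmem.1 hz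
      -- z lies on an edge of N other than f, hence on an edge of N', hence is a vertex of N'
      obtain ⟨u1, u2, hu1, hu2, hu12, hzu1, hzu2⟩ := exists_two_edges G hs hzv
      have hzN' : ∃ u, u ∈ sqEdges a' b' c' d' ∧ z ∈ u := by
        by_cases h1 : u1 = s(x,y)
        · subst h1
          refine ⟨u2, ?_, hzu2⟩
          by_contra hu2n
          have : u2 ∈ sqEdges a b c d \ sqEdges a' b' c' d' := Finset.mem_sdiff.2 ⟨hu2, hu2n⟩
          rw [hf, Finset.mem_singleton] at this
          exact hu12 this.symm
        · refine ⟨u1, ?_, hzu1⟩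
          by_contra hu1n
          have : u1 ∈ sqEdges a b c d \ sqEdges a' b' c' d' := Finset.mem_sdiff.2 ⟨hu1, hu1n⟩
          rw [hf, Finset.mem_singleton] at this
          exact h1 this
      obtain ⟨u, huN', hzu⟩ := hzN'
      have hzv' : z = a' ∨ z = b' ∨ z = c' ∨ z = d' := sqEdges_vertex huN' hzu
      obtain ⟨d1, d2, hd1', hd2', hd12, hzd1, hzd2⟩ := exists_two_edges G hs' hzv'
      -- one of d1, d2 must be g
      by_cases hgd1 : d1 = g
      · exact hgd1 ▸ hzd1
      by_cases hgd2 : d2 = g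
      · exact hgd2 ▸ hzd2
      -- otherwise d1, d2 ∈ N, together with f three distinct edges of N at z
      have hd1N : d1 ∈ sqEdges a b c d := by
        by_contra hn
        have : d1 ∈ sqEdges a' b' c' d' \ sqEdges a b c d := Finset.mem_sdiff.2 ⟨hd1', hn⟩
        rw [hg, Finset.mem_singleton] at this
        exact hgd1 this
      have hd2N : d2 ∈ sqEdges a b c d := by
        by_contra hn
        have : d2 ∈ sqEdges a' b' c' d' \ sqEdges a b c d := Finset.mem_sdiff.2 ⟨hd2', hn⟩
        rw [hg, Finset.mem_singleton] at this
        exact hgd2 this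
      have hfd1 : s(x,y) ≠ d1 := by
        intro h; rw [← h] at hd1'; exact hfmem.2 hd1'
      have hfd2 : s(x,y) ≠ d2 := by
        intro h; rw [← h] at hd2'; exact hfmem.2 hd2'
      rcases two_edges_at_vertex G hs hfmem.1 hd1N hd2N hz hzd1 hzd2 with h|h|h
      · exact absurd h hfd1
      · exact absurd h hfd2
      · exact absurd h hd12
    have hxg : x ∈ g := key x (by simp)
    have hyg : y ∈ g := key y (by simp)
    have : g = s(x,y) := sym2_eq_of_two_mem hxy hxg hyg
    rw [this] at hgmem
    exact hgmem.2 hfmem.1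
  · -- four shared edges: the squares are equal
    have h1 : sqEdges a b c d ∩ sqEdges a' b' c' d' = sqEdges a b c d :=
      Finset.eq_of_subset_of_card_le Finset.inter_subset_left (by omega)
    have h2 : sqEdges a b c d ⊆ sqEdges a' b' c' d' := by
      rw [← h1]; exact Finset.inter_subset_right
    exact hne (Finset.eq_of_subset_of_card_le h2 (by omega))

/-- `N` is the native edge set of some problematic square. -/
def PSet (N : Finset (Sym2 V)) : Prop :=
  ∃ a b c d : V, ProblemSq G w a b c d ∧ N = sqEdges a b c d

/-- The (unique) native edge set of a problematic square containing `e`,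
defined by the same choice as in `sqHalfW`. -/
noncomputable def NOf (e : Sym2 V) : Finset (Sym2 V) :=
  if h : ∃ N : Finset (Sym2 V),
      (∃ a b c d : V, ProblemSq G w a b c d ∧ N = sqEdges a b c d) ∧ e ∈ N then
    h.choose else ∅

lemma InPSq_exists {e : Sym2 V} (he : InPSq G w e) :
    ∃ N : Finset (Sym2 V),
      (∃ a b c d : V, ProblemSq G w a b c d ∧ N = sqEdges a b c d) ∧ e ∈ N := by
  obtain ⟨a, b, c, d, hp, hm⟩ := he
  exact ⟨sqEdges a b c d, ⟨a, b, c, d, hp, rfl⟩, hm⟩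

lemma NOf_spec {e : Sym2 V} (he : InPSq G w e) :
    PSet G w (NOf G w e) ∧ e ∈ NOf G w e := by
  have h := InPSq_exists G w he
  rw [NOf, dif_pos h]
  exact h.choose_spec

lemma NOf_eq {e : Sym2 V} {a b c d : V} (hp : ProblemSq G w a b c d)
    (he : e ∈ sqEdges a b c d) : NOf G w e = sqEdges a b c d := by
  have hin : InPSq G w e := ⟨a, b, c, d, hp, he⟩
  obtain ⟨⟨a', b', c', d', hp', hN⟩, heN⟩ := NOf_spec G w hin
  by_contra hne
  rw [hN] at heN hne
  have := problem_disjoint G w hp' hp hne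
  have : e ∈ (∅ : Finset (Sym2 V)) := this ▸ Finset.mem_inter.2 ⟨heN, he⟩
  simp at this

lemma InPSq_endpoints {p q : V} (h : InPSq G w s(p,q)) :
    G.Adj p q ∧ p ≠ q := by
  obtain ⟨a, b, c, d, hp, hm⟩ := h
  have := sqEdges_endpoints G hp.1 hm
  exact ⟨this.1, this.1.ne⟩

lemma sqHalfW_eval (ρ : Finset (Sym2 V) → V → ℝ) {p q : V} (hpq : InPSq G w s(p,q)) :
    sqHalfW G w ρ p q = ρ (NOf G w s(p,q)) p := by
  have h := InPSq_exists G w hpq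
  rw [sqHalfW, dif_pos h, NOf, dif_pos h]

lemma half_weight (ρ : Finset (Sym2 V) → V → ℝ)
    (hρ : ∀ a b c d : V, IsSquare4 G a b c d → ∀ x y : V,
      (x = a ∨ x = b ∨ x = c ∨ x = d) → (y = a ∨ y = b ∨ y = c ∨ y = d) →
      G.Adj x y → w s(x, y) = ρ (sqEdges a b c d) x + ρ (sqEdges a b c d) y)
    {p q : V} (hpq : InPSq G w s(p,q)) :
    ρ (NOf G w s(p,q)) p + ρ (NOf G w s(p,q)) q = w s(p,q) := by
  obtain ⟨⟨a, b, c, d, hp, hN⟩, heN⟩ := NOf_spec G w hpq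
  rw [hN] at heN ⊢
  obtain ⟨hadj, hp4, hq4⟩ := sqEdges_endpoints G hp.1 heN
  exact (hρ a b c d hp.1 p q hp4 hq4 hadj).symm

/-- The designated missing edge of `N` (as a singleton finset). -/
noncomputable def dsg (M N : Finset (Sym2 V)) : Finset (Sym2 V) :=
  if h : (N \ M).Nonempty then {h.choose} else ∅

lemma dsg_subset (M N : Finset (Sym2 V)) : dsg M N ⊆ N \ M := by
  rw [dsg]
  split
  · next h =>
    intro x hx
    rw [Finset.mem_singleton] at hx
    subst hx
    exact h.choose_spec
  · intro x hx; simp at hx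

lemma dsg_nonempty {M N : Finset (Sym2 V)} (h : (N \ M).Nonempty) :
    ∃ e0, dsg M N = {e0} := ⟨_, by rw [dsg, dif_pos h]⟩

/-- A canonical labeling of the problematic square with native edge set `N`. -/
noncomputable def quad (N : Finset (Sym2 V)) (h : PSet G w N) : V × V × V × V :=
  ⟨h.choose, h.choose_spec.choose, h.choose_spec.choose_spec.choose,
    h.choose_spec.choose_spec.choose_spec.choose⟩

lemma quad_spec (N : Finset (Sym2 V)) (h : PSet G w N) :
    ProblemSq G w (quad G w N h).1 (quad G w N h).2.1 (quad G w N h).2.2.1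
      (quad G w N h).2.2.2 ∧
    N = sqEdges (quad G w N h).1 (quad G w N h).2.1 (quad G w N h).2.2.1
      (quad G w N h).2.2.2 :=
  h.choose_spec.choose_spec.choose_spec.choose_spec

/-- The pair of opposite vertices of the problematic square `N` containing `p`. -/
noncomputable def pairOf (N : Finset (Sym2 V)) (p : V) : Finset V :=
  if h : PSet G w N then
    if p = (quad G w N h).1 ∨ p = (quad G w N h).2.2.1
    then {(quad G w N h).1, (quad G w N h).2.2.1}
    else {(quad G w N h).2.1, (quad G w N h).2.2.2}
  else ∅

lemma pair_ne {A B C D : V} (hs : IsSquare4 G A B C D) :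
    ({A,C} : Finset V) ≠ {B,D} := by
  obtain ⟨hab, hac, had, hbc, hbd, hcd, -⟩ := hs
  intro hEq
  have : A ∈ ({B,D} : Finset V) := hEq ▸ Finset.mem_insert_self A {C}
  rw [Finset.mem_insert, Finset.mem_singleton] at this
  tauto

lemma pair_core {A B C D p q : V} (hs : IsSquare4 G A B C D)
    (hpq : s(p,q) ∈ sqEdges A B C D) :
    (p ∈ (if p = A ∨ p = C then ({A,C} : Finset V) else {B,D})) ∧
    (if p = A ∨ p = C then ({A,C} : Finset V) else {B,D}) ≠
      (if q = A ∨ q = C then ({A,C} : Finset V) else {B,D}) ∧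
    (({A,C} : Finset V) = (if p = A ∨ p = C then ({A,C} : Finset V) else {B,D}) ∨
      ({A,C} : Finset V) = (if q = A ∨ q = C then ({A,C} : Finset V) else {B,D})) ∧
    (({B,D} : Finset V) = (if p = A ∨ p = C then ({A,C} : Finset V) else {B,D}) ∨
      ({B,D} : Finset V) = (if q = A ∨ q = C then ({A,C} : Finset V) else {B,D})) := by
  have hPne := pair_ne G hs
  have hsplit := edge_split G hs hpq
  obtain ⟨hab, hac, had, hbc, hbd, hcd, -⟩ := hs
  have hba := hab.symm; have hca := hac.symm; have hda := had.symm
  have hcb := hbc.symm; have hdb := hbd.symm; have hdc := hcd.symm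
  rcases hsplit with ⟨hp4, hq4⟩|⟨hp4, hq4⟩
  · have hq4' : ¬(q = A ∨ q = C) := by rcases hq4 with rfl|rfl <;> tauto
    rw [if_pos hp4, if_neg hq4']
    exact ⟨by rcases hp4 with rfl|rfl <;> simp, hPne, Or.inl rfl, Or.inr rfl⟩
  · have hp4' : ¬(p = A ∨ p = C) := by rcases hp4 with rfl|rfl <;> tauto
    rw [if_neg hp4', if_pos hq4]
    exact ⟨by rcases hp4 with rfl|rfl <;> simp, hPne.symm, Or.inr rfl, Or.inl rfl⟩

lemma glob_pair_cases {N : Finset (Sym2 V)} {P : Finset V} (h : PSet G w N)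
    (hP : SqGlobMean G w P N) :
    P = {(quad G w N h).1, (quad G w N h).2.2.1} ∨
    P = {(quad G w N h).2.1, (quad G w N h).2.2.2} := by
  obtain ⟨hQ, hNe⟩ := quad_spec G w N h
  obtain ⟨a, b, c, d, hp, hN', hPor⟩ := hP
  have hNN : sqEdges a b c d = sqEdges (quad G w N h).1 (quad G w N h).2.1
      (quad G w N h).2.2.1 (quad G w N h).2.2.2 := hN'.symm.trans hNe
  rcases hPor with rfl|rfl
  · refine pair_det G hQ.1 ?_ ?_ hp.1.2.1 ?_
    · exact sqEdges_vertex (hNN ▸ mem_sqEdges_self₁ a b c d) (by simp)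
    · exact sqEdges_vertex (hNN ▸ mem_sqEdges_self₂ a b c d) (by simp)
    · rw [← hNN]; exact diag_not_mem₁ G hp.1
  · refine pair_det G hQ.1 ?_ ?_ hp.1.2.2.2.2.1 ?_
    · exact sqEdges_vertex (hNN ▸ mem_sqEdges_self₁ a b c d) (by simp)
    · exact sqEdges_vertex (hNN ▸ mem_sqEdges_self₃ a b c d) (by simp)
    · rw [← hNN]; exact diag_not_mem₂ G hp.1

lemma pairOf_eval {N : Finset (Sym2 V)} (h : PSet G w N) (p : V) :
    pairOf G w N p =
      if p = (quad G w N h).1 ∨ p = (quad G w N h).2.2.1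
      then {(quad G w N h).1, (quad G w N h).2.2.1}
      else {(quad G w N h).2.1, (quad G w N h).2.2.2} := by
  rw [pairOf, dif_pos h]

lemma pairOf_full {N : Finset (Sym2 V)} {p q : V} (h : PSet G w N) (hpq : s(p,q) ∈ N) :
    p ∈ pairOf G w N p ∧ q ∈ pairOf G w N q ∧ pairOf G w N p ≠ pairOf G w N q ∧
      ∀ P, SqGlobMean G w P N → P = pairOf G w N p ∨ P = pairOf G w N q := by
  obtain ⟨hQ, hNe⟩ := quad_spec G w N h
  have hpq' : s(p,q) ∈ sqEdges (quad G w N h).1 (quad G w N h).2.1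
      (quad G w N h).2.2.1 (quad G w N h).2.2.2 := hNe ▸ hpq
  have hqp' : s(q,p) ∈ sqEdges (quad G w N h).1 (quad G w N h).2.1
      (quad G w N h).2.2.1 (quad G w N h).2.2.2 := Sym2.eq_swap (a := q) (b := p) ▸ hpq'
  have core := pair_core G hQ.1 hpq'
  have coreq := (pair_core G hQ.1 hqp').1
  rw [pairOf_eval G w h p, pairOf_eval G w h q]
  refine ⟨core.1, coreq, core.2.1, ?_⟩
  intro P hP
  rcases glob_pair_cases G w h hP with rfl|rfl
  · exact core.2.2.1
  · exact core.2.2.2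

/-! #### The construction of `M'` -/

/-- Kept edges of `M`. -/
noncomputable def keptE (M : Finset (Sym2 V)) : Finset (Sym2 (V ⊕ NVS V)) :=
  (M.filter fun e => ¬ InPSq G w e).image (Sym2.map Sum.inl)

/-- The two half-edges of a subdivided native edge. -/
noncomputable def halfPair : Sym2 V → Finset (Sym2 (V ⊕ NVS V)) :=
  Sym2.lift ⟨fun p q =>
    {s(Sum.inl p, Sum.inr (NVS.sub p q)), s(Sum.inl q, Sum.inr (NVS.sub q p))},
    fun _ _ => Finset.pair_comm _ _⟩

noncomputable def halfE (M : Finset (Sym2 V)) : Finset (Sym2 (V ⊕ NVS V)) :=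
  (M.filter fun e => InPSq G w e).biUnion halfPair

/-- The eliminator edge of a subdivided native edge. -/
noncomputable def elimEdge : Sym2 V → Sym2 (V ⊕ NVS V) :=
  Sym2.lift ⟨fun p q => s(Sum.inr (NVS.sub p q), Sum.inr (NVS.sub q p)),
    fun _ _ => Sym2.eq_swap⟩

noncomputable def elimE [Fintype V] (M : Finset (Sym2 V)) : Finset (Sym2 (V ⊕ NVS V)) :=
  ((Finset.univ : Finset (Sym2 V)).filter
    fun e => InPSq G w e ∧ e ∉ M ∧ e ∉ dsg M (NOf G w e)).image elimEdge

/-- The two global edges attached to a designated missing edge. -/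
noncomputable def globPair : Sym2 V → Finset (Sym2 (V ⊕ NVS V)) :=
  Sym2.lift ⟨fun p q =>
    {s(Sum.inr (NVS.globS (pairOf G w (NOf G w s(p,q)) p) (NOf G w s(p,q))),
        Sum.inr (NVS.sub p q)),
     s(Sum.inr (NVS.globS (pairOf G w (NOf G w s(p,q)) q) (NOf G w s(p,q))),
        Sum.inr (NVS.sub q p))},
    fun p q => by
      dsimp only
      rw [show (s(q,p) : Sym2 V) = s(p,q) from Sym2.eq_swap, Finset.pair_comm]⟩

noncomputable def globE [Fintype V] (M : Finset (Sym2 V)) : Finset (Sym2 (V ⊕ NVS V)) :=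
  ((Finset.univ : Finset (Sym2 V)).filter
    fun e => InPSq G w e ∧ e ∈ dsg M (NOf G w e)).biUnion (globPair G w)

noncomputable def auxM [Fintype V] (M : Finset (Sym2 V)) : Finset (Sym2 (V ⊕ NVS V)) :=
  keptE G w M ∪ halfE G w M ∪ elimE G w M ∪ globE G w M

lemma halfPair_eval (p q : V) :
    halfPair s(p,q) = {s(Sum.inl p, Sum.inr (NVS.sub p q)),
      s(Sum.inl q, Sum.inr (NVS.sub q p))} := Sym2.lift_mk ..

lemma elimEdge_eval (p q : V) :
    elimEdge s(p,q) = s(Sum.inr (NVS.sub p q), Sum.inr (NVS.sub q p)) := Sym2.lift_mk ..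

lemma globPair_eval (p q : V) :
    globPair G w s(p,q) =
      {s(Sum.inr (NVS.globS (pairOf G w (NOf G w s(p,q)) p) (NOf G w s(p,q))),
          Sum.inr (NVS.sub p q)),
       s(Sum.inr (NVS.globS (pairOf G w (NOf G w s(p,q)) q) (NOf G w s(p,q))),
          Sum.inr (NVS.sub q p))} := Sym2.lift_mk ..

lemma sym2_repr (e : Sym2 V) : ∃ u v : V, e = s(u,v) :=
  Sym2.inductionOn e (fun u v => ⟨u, v, rfl⟩)

lemma mem_keptE {M : Finset (Sym2 V)} {x : Sym2 (V ⊕ NVS V)} :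
    x ∈ keptE G w M ↔ ∃ u v : V, s(u,v) ∈ M ∧ ¬ InPSq G w s(u,v) ∧
      x = s(Sum.inl u, Sum.inl v) := by
  rw [keptE, Finset.mem_image]
  constructor
  · rintro ⟨e, he, rfl⟩
    rw [Finset.mem_filter] at he
    obtain ⟨u, v, rfl⟩ := sym2_repr e
    exact ⟨u, v, he.1, he.2, by rw [Sym2.map_pair_eq]⟩
  · rintro ⟨u, v, h1, h2, rfl⟩
    exact ⟨s(u,v), Finset.mem_filter.2 ⟨h1, h2⟩, by rw [Sym2.map_pair_eq]⟩

lemma mem_halfE {M : Finset (Sym2 V)} {x : Sym2 (V ⊕ NVS V)} :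
    x ∈ halfE G w M ↔ ∃ p q : V, s(p,q) ∈ M ∧ InPSq G w s(p,q) ∧
      x = s(Sum.inl p, Sum.inr (NVS.sub p q)) := by
  rw [halfE, Finset.mem_biUnion]
  constructor
  · rintro ⟨e, he, hx⟩
    rw [Finset.mem_filter] at he
    obtain ⟨u, v, rfl⟩ := sym2_repr e
    rw [halfPair_eval, Finset.mem_insert, Finset.mem_singleton] at hx
    rcases hx with rfl|rfl
    · exact ⟨u, v, he.1, he.2, rfl⟩
    · exact ⟨v, u, Sym2.eq_swap (a := u) (b := v) ▸ he.1,
        Sym2.eq_swap (a := u) (b := v) ▸ he.2, rfl⟩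
  · rintro ⟨p, q, h1, h2, rfl⟩
    exact ⟨s(p,q), Finset.mem_filter.2 ⟨h1, h2⟩, by
      rw [halfPair_eval]; exact Finset.mem_insert_self _ _⟩

lemma mem_elimE [Fintype V] {M : Finset (Sym2 V)} {x : Sym2 (V ⊕ NVS V)} :
    x ∈ elimE G w M ↔ ∃ p q : V, InPSq G w s(p,q) ∧ s(p,q) ∉ M ∧
      s(p,q) ∉ dsg M (NOf G w s(p,q)) ∧
      x = s(Sum.inr (NVS.sub p q), Sum.inr (NVS.sub q p)) := by
  rw [elimE, Finset.mem_image]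
  constructor
  · rintro ⟨e, he, rfl⟩
    rw [Finset.mem_filter] at he
    obtain ⟨u, v, rfl⟩ := sym2_repr e
    exact ⟨u, v, he.2.1, he.2.2.1, he.2.2.2, by rw [elimEdge_eval]⟩
  · rintro ⟨p, q, h1, h2, h3, rfl⟩
    exact ⟨s(p,q), Finset.mem_filter.2 ⟨Finset.mem_univ _, h1, h2, h3⟩, by
      rw [elimEdge_eval]⟩

lemma mem_globE [Fintype V] {M : Finset (Sym2 V)} {x : Sym2 (V ⊕ NVS V)} :
    x ∈ globE G w M ↔ ∃ p q : V, InPSq G w s(p,q) ∧ s(p,q) ∈ dsg M (NOf G w s(p,q)) ∧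
      x = s(Sum.inr (NVS.globS (pairOf G w (NOf G w s(p,q)) p) (NOf G w s(p,q))),
        Sum.inr (NVS.sub p q)) := by
  rw [globE, Finset.mem_biUnion]
  constructor
  · rintro ⟨e, he, hx⟩
    rw [Finset.mem_filter] at he
    obtain ⟨u, v, rfl⟩ := sym2_repr e
    rw [globPair_eval, Finset.mem_insert, Finset.mem_singleton] at hx
    rcases hx with rfl|rfl
    · exact ⟨u, v, he.2.1, he.2.2, rfl⟩
    · refine ⟨v, u, Sym2.eq_swap (a := u) (b := v) ▸ he.2.1,
        Sym2.eq_swap (a := u) (b := v) ▸ he.2.2, ?_⟩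
      rw [show (s(v,u) : Sym2 V) = s(u,v) from Sym2.eq_swap]
  · rintro ⟨p, q, h1, h2, rfl⟩
    exact ⟨s(p,q), Finset.mem_filter.2 ⟨Finset.mem_univ _, h1, h2⟩, by
      rw [globPair_eval]; exact Finset.mem_insert_self _ _⟩

lemma pairOf_glob {N : Finset (Sym2 V)} (h : PSet G w N) {p q : V} (hpq : s(p,q) ∈ N) :
    SqGlobMean G w (pairOf G w N p) N ∧ p ∈ pairOf G w N p := by
  obtain ⟨hQ, hNe⟩ := quad_spec G w N h
  have hp4 : p = (quad G w N h).1 ∨ p = (quad G w N h).2.1 ∨ p = (quad G w N h).2.2.1 ∨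
      p = (quad G w N h).2.2.2 := sqEdges_vertex (hNe ▸ hpq) (by simp)
  rw [pairOf_eval G w h p]
  by_cases hc : p = (quad G w N h).1 ∨ p = (quad G w N h).2.2.1
  · rw [if_pos hc]
    exact ⟨⟨_, _, _, _, hQ, hNe, Or.inl rfl⟩, by
      rcases hc with rfl|rfl
      · exact Finset.mem_insert_self _ _
      · exact Finset.mem_insert_of_mem (Finset.mem_singleton_self _)⟩
  · rw [if_neg hc]
    refine ⟨⟨_, _, _, _, hQ, hNe, Or.inr rfl⟩, ?_⟩
    have : p = (quad G w N h).2.1 ∨ p = (quad G w N h).2.2.2 := by tauto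
    rcases this with rfl|rfl
    · exact Finset.mem_insert_self _ _
    · exact Finset.mem_insert_of_mem (Finset.mem_singleton_self _)

lemma NOf_swap (p q : V) : NOf G w s(q,p) = NOf G w s(p,q) := by
  rw [show (s(q,p) : Sym2 V) = s(p,q) from Sym2.eq_swap]

lemma InPSq_swap {p q : V} (h : InPSq G w s(p,q)) : InPSq G w s(q,p) := by
  rwa [show (s(q,p) : Sym2 V) = s(p,q) from Sym2.eq_swap]

/-! #### Weights of the new edges -/

lemma sqW_eval (ρ : Finset (Sym2 V) → V → ℝ) (α β : V ⊕ NVS V) :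
    sqW G w ρ s(α,β) = sqWbase G w ρ α β + sqWbase G w ρ β α := Sym2.lift_mk ..

lemma sqW_kept (ρ : Finset (Sym2 V) → V → ℝ) (u v : V) :
    sqW G w ρ s(Sum.inl u, Sum.inl v) = w s(u,v) := by
  rw [sqW_eval]
  show w s(u,v) / 2 + w s(v,u) / 2 = w s(u,v)
  rw [show (s(v,u) : Sym2 V) = s(u,v) from Sym2.eq_swap]
  ring

lemma sqW_half (ρ : Finset (Sym2 V) → V → ℝ) (p q : V) :
    sqW G w ρ s(Sum.inl p, Sum.inr (NVS.sub p q)) = sqHalfW G w ρ p q := by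
  rw [sqW_eval]
  show (if p = p then sqHalfW G w ρ p q else 0) + 0 = _
  rw [if_pos rfl, add_zero]

lemma sqW_elim (ρ : Finset (Sym2 V) → V → ℝ) (p q : V) :
    sqW G w ρ s(Sum.inr (NVS.sub p q), Sum.inr (NVS.sub q p)) = 0 := by
  rw [sqW_eval]
  show (0 : ℝ) + 0 = 0
  ring

lemma sqW_glob (ρ : Finset (Sym2 V) → V → ℝ) (P : Finset V) (N : Finset (Sym2 V)) (p q : V) :
    sqW G w ρ s(Sum.inr (NVS.globS P N), Sum.inr (NVS.sub p q)) = 0 := by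
  rw [sqW_eval]
  show (0 : ℝ) + 0 = 0
  ring

/-! #### The constructed set consists of edges of the auxiliary graph -/

lemma auxM_subset_edgeSet [Fintype V] {M : Finset (Sym2 V)}
    (hM : ∀ e ∈ M, e ∈ G.edgeSet) {x : Sym2 (V ⊕ NVS V)}
    (hx : x ∈ auxM G w M) : x ∈ (sqAuxG G w).edgeSet := by
  rw [auxM, Finset.mem_union, Finset.mem_union, Finset.mem_union] at hx
  rcases hx with ((hx|hx)|hx)|hx
  · obtain ⟨u, v, h1, h2, rfl⟩ := (mem_keptE G w).1 hx
    have hadj : G.Adj u v := hM _ h1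
    rw [SimpleGraph.mem_edgeSet, sqAuxG, SimpleGraph.fromRel_adj]
    exact ⟨by simp [hadj.ne], Or.inl ⟨hadj, h2⟩⟩
  · obtain ⟨p, q, h1, h2, rfl⟩ := (mem_halfE G w).1 hx
    rw [SimpleGraph.mem_edgeSet, sqAuxG, SimpleGraph.fromRel_adj]
    exact ⟨by simp, Or.inl ⟨rfl, h2⟩⟩
  · obtain ⟨p, q, h1, h2, h3, rfl⟩ := (mem_elimE G w).1 hx
    have hne : p ≠ q := (InPSq_endpoints G w h1).2
    rw [SimpleGraph.mem_edgeSet, sqAuxG, SimpleGraph.fromRel_adj]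
    refine ⟨?_, Or.inl ⟨rfl, rfl, h1⟩⟩
    intro hcon
    rw [Sum.inr.injEq, NVS.sub.injEq] at hcon
    exact hne hcon.1
  · obtain ⟨p, q, h1, h2, rfl⟩ := (mem_globE G w).1 hx
    obtain ⟨hPS, hmem⟩ := NOf_spec G w h1
    rw [SimpleGraph.mem_edgeSet, sqAuxG, SimpleGraph.fromRel_adj]
    have := pairOf_glob G w hPS hmem
    exact ⟨by simp, Or.inl ⟨this.1, this.2, hmem⟩⟩

/-- Retraction of the auxiliary vertex set onto `V` (with default `x`). -/
def retr (x : V) : V ⊕ NVS V → V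
  | .inl v => v
  | .inr (.sub _ q) => q
  | .inr (.globS _ _) => x

lemma keptE_subset_auxM [Fintype V] (M : Finset (Sym2 V)) :
    keptE G w M ⊆ auxM G w M :=
  (Finset.subset_union_left.trans Finset.subset_union_left).trans Finset.subset_union_left

lemma halfE_subset_auxM [Fintype V] (M : Finset (Sym2 V)) :
    halfE G w M ⊆ auxM G w M :=
  (Finset.subset_union_right.trans Finset.subset_union_left).trans Finset.subset_union_left

lemma elimE_subset_auxM [Fintype V] (M : Finset (Sym2 V)) :
    elimE G w M ⊆ auxM G w M :=
  Finset.subset_union_right.trans Finset.subset_union_left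

lemma globE_subset_auxM [Fintype V] (M : Finset (Sym2 V)) :
    globE G w M ⊆ auxM G w M :=
  Finset.subset_union_right

lemma degIn_eq {α : Type*} [DecidableEq α] (M : Finset (Sym2 α)) (v : α) :
    degIn M v = (M.filter (fun e => v ∈ e)).card := by
  rw [degIn]
  congr 1
  apply Finset.filter_congr_decidable

lemma deg_inl [Fintype V] {M : Finset (Sym2 V)} (hM : Is2Matching G M) (x : V) :
    degIn (auxM G w M) (Sum.inl x) ≤ 2 := by
  have hM2 := hM.2 x
  rw [degIn_eq] at hM2 ⊢
  have claim : ∀ y ∈ auxM G w M, Sum.inl x ∈ y →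
      ∃ e, e ∈ M ∧ x ∈ e ∧ Sym2.map (retr x) y = e ∧
        ((¬ InPSq G w e ∧ y = Sym2.map Sum.inl e) ∨
         (InPSq G w e ∧ ∃ q', e = s(x,q') ∧
            y = s(Sum.inl x, Sum.inr (NVS.sub x q')))) := by
    intro y hyM hxy
    rw [auxM, Finset.mem_union, Finset.mem_union, Finset.mem_union] at hyM
    rcases hyM with ((h|h)|h)|h
    · obtain ⟨u, v, h1, h2, rfl⟩ := (mem_keptE G w).1 h
      have hx : x = u ∨ x = v := by
        rw [Sym2.mem_iff] at hxy
        simpa using hxy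
      refine ⟨s(u,v), h1, Sym2.mem_iff.2 hx, ?_, Or.inl ⟨h2, by rw [Sym2.map_pair_eq]⟩⟩
      rw [Sym2.map_pair_eq]
      rfl
    · obtain ⟨p, q, h1, h2, rfl⟩ := (mem_halfE G w).1 h
      have hx : x = p := by
        rw [Sym2.mem_iff] at hxy
        simpa using hxy
      subst hx
      refine ⟨s(x,q), h1, Sym2.mem_iff.2 (Or.inl rfl), ?_, Or.inr ⟨h2, q, rfl, rfl⟩⟩
      rw [Sym2.map_pair_eq]
      rfl
    · obtain ⟨p, q, h1, h2, h3, rfl⟩ := (mem_elimE G w).1 h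
      rw [Sym2.mem_iff] at hxy
      simp at hxy
    · obtain ⟨p, q, h1, h2, rfl⟩ := (mem_globE G w).1 h
      rw [Sym2.mem_iff] at hxy
      simp at hxy
  refine le_trans (Finset.card_le_card_of_injOn (Sym2.map (retr x)) ?_ ?_) hM2
  · intro y hy
    rw [Finset.mem_coe, Finset.mem_filter] at hy
    obtain ⟨e, he, hxe, hmap, -⟩ := claim y hy.1 hy.2
    rw [hmap]
    exact Finset.mem_filter.2 ⟨he, hxe⟩
  · intro y1 h1 y2 h2 heq
    rw [Finset.mem_coe, Finset.mem_filter] at h1 h2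
    obtain ⟨e1, he1, hxe1, hm1, hc1⟩ := claim y1 h1.1 h1.2
    obtain ⟨e2, he2, hxe2, hm2, hc2⟩ := claim y2 h2.1 h2.2
    have hee : e1 = e2 := by rw [← hm1, ← hm2, heq]
    subst hee
    rcases hc1 with ⟨hn1, hy1⟩|⟨hi1, q1, hq1, hy1⟩ <;>
      rcases hc2 with ⟨hn2, hy2⟩|⟨hi2, q2, hq2, hy2⟩
    · rw [hy1, hy2]
    · exact absurd hi2 hn1
    · exact absurd hi1 hn2
    · have hq : q1 = q2 := by
        have h12 : (s(x,q1) : Sym2 V) = s(x,q2) := hq1.symm.trans hq2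
        rw [Sym2.eq_iff] at h12
        rcases h12 with ⟨-, h⟩|⟨h, h'⟩
        · exact h
        · exact h'.trans h
      subst hq
      rw [hy1, hy2]

lemma deg_sub [Fintype V] {M : Finset (Sym2 V)} {p q : V} (hpq : InPSq G w s(p,q)) :
    degIn (auxM G w M) (Sum.inr (NVS.sub p q)) = 1 := by
  rw [degIn_eq]
  have claim : ∀ y ∈ auxM G w M, Sum.inr (NVS.sub p q) ∈ y →
      (s(p,q) ∈ M ∧ y = s(Sum.inl p, Sum.inr (NVS.sub p q))) ∨
      ((s(p,q) ∉ M ∧ s(p,q) ∉ dsg M (NOf G w s(p,q))) ∧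
        y = s(Sum.inr (NVS.sub p q), Sum.inr (NVS.sub q p))) ∨
      (s(p,q) ∈ dsg M (NOf G w s(p,q)) ∧
        y = s(Sum.inr (NVS.globS (pairOf G w (NOf G w s(p,q)) p) (NOf G w s(p,q))),
          Sum.inr (NVS.sub p q))) := by
    intro y hy hv
    rw [auxM, Finset.mem_union, Finset.mem_union, Finset.mem_union] at hy
    rcases hy with ((h|h)|h)|h
    · obtain ⟨u, v, -, -, rfl⟩ := (mem_keptE G w).1 h
      rw [Sym2.mem_iff] at hv
      simp at hv
    · obtain ⟨p', q', h1, h2, rfl⟩ := (mem_halfE G w).1 h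
      rw [Sym2.mem_iff] at hv
      have : p' = p ∧ q' = q := by simpa [eq_comm] using hv
      obtain ⟨rfl, rfl⟩ := this
      exact Or.inl ⟨h1, rfl⟩
    · obtain ⟨p', q', h1, h2, h3, rfl⟩ := (mem_elimE G w).1 h
      rw [Sym2.mem_iff] at hv
      rcases hv with h'|h'
      · rw [Sum.inr.injEq, NVS.sub.injEq] at h'
        obtain ⟨hp', hq'⟩ := h'
        subst hp'
        subst hq'
        exact Or.inr (Or.inl ⟨⟨h2, h3⟩, rfl⟩)
      · rw [Sum.inr.injEq, NVS.sub.injEq] at h'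
        obtain ⟨hq', hp'⟩ := h'
        subst hq'
        subst hp'
        rw [show (s(q,p) : Sym2 V) = s(p,q) from Sym2.eq_swap] at h1 h2 h3
        exact Or.inr (Or.inl ⟨⟨h2, h3⟩, Sym2.eq_swap⟩)
    · obtain ⟨p', q', h1, h2, rfl⟩ := (mem_globE G w).1 h
      rw [Sym2.mem_iff] at hv
      have : p' = p ∧ q' = q := by simpa [eq_comm] using hv
      obtain ⟨rfl, rfl⟩ := this
      exact Or.inr (Or.inr ⟨h2, rfl⟩)
  rw [Finset.card_eq_one]
  by_cases hMem : s(p,q) ∈ M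
  · refine ⟨s(Sum.inl p, Sum.inr (NVS.sub p q)), Finset.eq_singleton_iff_unique_mem.2 ⟨?_, ?_⟩⟩
    · refine Finset.mem_filter.2 ⟨halfE_subset_auxM G w M ((mem_halfE G w).2
        ⟨p, q, hMem, hpq, rfl⟩), Sym2.mem_iff.2 (Or.inr rfl)⟩
    · intro y hy
      rw [Finset.mem_filter] at hy
      rcases claim y hy.1 hy.2 with ⟨-, h⟩|⟨⟨hn, -⟩, -⟩|⟨hd, -⟩
      · exact h
      · exact absurd hMem hn
      · have := Finset.mem_sdiff.1 (dsg_subset M (NOf G w s(p,q)) hd)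
        exact absurd hMem this.2
  · by_cases hD : s(p,q) ∈ dsg M (NOf G w s(p,q))
    · refine ⟨s(Sum.inr (NVS.globS (pairOf G w (NOf G w s(p,q)) p) (NOf G w s(p,q))),
          Sum.inr (NVS.sub p q)), Finset.eq_singleton_iff_unique_mem.2 ⟨?_, ?_⟩⟩
      · refine Finset.mem_filter.2 ⟨globE_subset_auxM G w M ((mem_globE G w).2
          ⟨p, q, hpq, hD, rfl⟩), Sym2.mem_iff.2 (Or.inr rfl)⟩
      · intro y hy
        rw [Finset.mem_filter] at hy
        rcases claim y hy.1 hy.2 with ⟨hm, -⟩|⟨⟨-, hn⟩, -⟩|⟨-, h⟩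
        · exact absurd hm hMem
        · exact absurd hD hn
        · exact h
    · refine ⟨s(Sum.inr (NVS.sub p q), Sum.inr (NVS.sub q p)),
        Finset.eq_singleton_iff_unique_mem.2 ⟨?_, ?_⟩⟩
      · refine Finset.mem_filter.2 ⟨elimE_subset_auxM G w M ((mem_elimE G w).2
          ⟨p, q, hpq, hMem, hD, rfl⟩), Sym2.mem_iff.2 (Or.inl rfl)⟩
      · intro y hy
        rw [Finset.mem_filter] at hy
        rcases claim y hy.1 hy.2 with ⟨hm, -⟩|⟨-, h⟩|⟨hd, -⟩
        · exact absurd hm hMem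
        · exact h
        · exact absurd hd hD

lemma deg_glob [Fintype V] {M : Finset (Sym2 V)} (hSF : SquareFree G M)
    {P : Finset V} {N : Finset (Sym2 V)} (hPN : SqGlobMean G w P N) :
    degIn (auxM G w M) (Sum.inr (NVS.globS P N)) = 1 := by
  have h : PSet G w N := by
    obtain ⟨a, b, c, d, hp, hN', -⟩ := hPN
    exact ⟨a, b, c, d, hp, hN'⟩
  obtain ⟨hQ, hNe⟩ := quad_spec G w N h
  have hNM : (N \ M).Nonempty := by
    rw [hNe]
    exact Finset.sdiff_nonempty.2 (hSF _ _ _ _ hQ.1)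
  obtain ⟨e0, he0⟩ := dsg_nonempty hNM
  have he0N : e0 ∈ N ∧ e0 ∉ M :=
    Finset.mem_sdiff.1 (dsg_subset M N (he0 ▸ Finset.mem_singleton_self e0))
  obtain ⟨x, y, hxy, rfl⟩ := sqEdges_exists_repr G hQ.1 (hNe ▸ he0N.1)
  have main : ∀ u t : V, s(u,t) = s(x,y) → P = pairOf G w N u →
      degIn (auxM G w M) (Sum.inr (NVS.globS P N)) = 1 := by
    intro u t het hPu
    have hutN : s(u,t) ∈ N := het ▸ he0N.1
    have hInP : InPSq G w s(u,t) := ⟨_, _, _, _, hQ, hNe ▸ hutN⟩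
    have hNOf : NOf G w s(u,t) = N := (NOf_eq G w hQ (hNe ▸ hutN)).trans hNe.symm
    have hdsg : s(u,t) ∈ dsg M (NOf G w s(u,t)) := by
      rw [hNOf, he0, Finset.mem_singleton]
      exact het
    rw [degIn_eq, Finset.card_eq_one]
    refine ⟨s(Sum.inr (NVS.globS P N), Sum.inr (NVS.sub u t)),
      Finset.eq_singleton_iff_unique_mem.2 ⟨?_, ?_⟩⟩
    · refine Finset.mem_filter.2 ⟨globE_subset_auxM G w M ((mem_globE G w).2
        ⟨u, t, hInP, hdsg, ?_⟩), Sym2.mem_iff.2 (Or.inl rfl)⟩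
      rw [hNOf, ← hPu]
    · intro y' hy'
      rw [Finset.mem_filter] at hy'
      obtain ⟨hy1, hv⟩ := hy'
      rw [auxM, Finset.mem_union, Finset.mem_union, Finset.mem_union] at hy1
      rcases hy1 with ((hk|hk)|hk)|hk
      · obtain ⟨u', v', -, -, rfl⟩ := (mem_keptE G w).1 hk
        rw [Sym2.mem_iff] at hv
        simp at hv
      · obtain ⟨p', q', -, -, rfl⟩ := (mem_halfE G w).1 hk
        rw [Sym2.mem_iff] at hv
        simp at hv
      · obtain ⟨p', q', -, -, -, rfl⟩ := (mem_elimE G w).1 hk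
        rw [Sym2.mem_iff] at hv
        simp at hv
      · obtain ⟨p', q', h1', h2', rfl⟩ := (mem_globE G w).1 hk
        rw [Sym2.mem_iff] at hv
        rcases hv with hv|hv
        swap
        · simp at hv
        rw [Sum.inr.injEq, NVS.globS.injEq] at hv
        obtain ⟨hvP, hvN⟩ := hv
        rw [← hvN, he0, Finset.mem_singleton] at h2'
        have : (s(p',q') : Sym2 V) = s(u,t) := h2'.trans het.symm
        rw [Sym2.eq_iff] at this
        rcases this with ⟨rfl, rfl⟩|⟨rfl, rfl⟩
        · rw [hvP, hvN]
        · -- wrong orientation: contradiction with pairOf N u ≠ pairOf N t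
          exfalso
          have hsw : NOf G w s(p',q') = N := (NOf_swap G w q' p').trans hNOf
          rw [hsw] at hvP
          have hfull := pairOf_full G w h hutN
          exact hfull.2.2.1 (hPu.symm.trans hvP)
  have hfull := pairOf_full G w h he0N.1
  rcases hfull.2.2.2 P hPN with hP|hP
  · exact main x y rfl hP
  · exact main y x Sym2.eq_swap hP

lemma mem_halfPair {e : Sym2 V} {x : Sym2 (V ⊕ NVS V)} :
    x ∈ halfPair e ↔ ∃ p q : V, e = s(p,q) ∧ x = s(Sum.inl p, Sum.inr (NVS.sub p q)) := by
  constructor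
  · intro hx
    obtain ⟨u, v, rfl⟩ := sym2_repr e
    rw [halfPair_eval, Finset.mem_insert, Finset.mem_singleton] at hx
    rcases hx with rfl|rfl
    · exact ⟨u, v, rfl, rfl⟩
    · exact ⟨v, u, Sym2.eq_swap, rfl⟩
  · rintro ⟨p, q, rfl, rfl⟩
    rw [halfPair_eval]
    exact Finset.mem_insert_self _ _

lemma disjKH [Fintype V] (M : Finset (Sym2 V)) :
    Disjoint (keptE G w M) (halfE G w M) := by
  rw [Finset.disjoint_left]
  intro a h1 h2
  obtain ⟨u, v, -, -, rfl⟩ := (mem_keptE G w).1 h1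
  obtain ⟨p, q, -, -, h⟩ := (mem_halfE G w).1 h2
  simp [Sym2.eq_iff] at h

lemma disjKE [Fintype V] (M : Finset (Sym2 V)) :
    Disjoint (keptE G w M) (elimE G w M) := by
  rw [Finset.disjoint_left]
  intro a h1 h2
  obtain ⟨u, v, -, -, rfl⟩ := (mem_keptE G w).1 h1
  obtain ⟨p, q, -, -, -, h⟩ := (mem_elimE G w).1 h2
  simp [Sym2.eq_iff] at h

lemma disjKG [Fintype V] (M : Finset (Sym2 V)) :
    Disjoint (keptE G w M) (globE G w M) := by
  rw [Finset.disjoint_left]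
  intro a h1 h2
  obtain ⟨u, v, -, -, rfl⟩ := (mem_keptE G w).1 h1
  obtain ⟨p, q, -, -, h⟩ := (mem_globE G w).1 h2
  simp [Sym2.eq_iff] at h

lemma disjHE [Fintype V] (M : Finset (Sym2 V)) :
    Disjoint (halfE G w M) (elimE G w M) := by
  rw [Finset.disjoint_left]
  intro a h1 h2
  obtain ⟨u, v, -, -, rfl⟩ := (mem_halfE G w).1 h1
  obtain ⟨p, q, -, -, -, h⟩ := (mem_elimE G w).1 h2
  simp [Sym2.eq_iff] at h

lemma disjHG [Fintype V] (M : Finset (Sym2 V)) :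
    Disjoint (halfE G w M) (globE G w M) := by
  rw [Finset.disjoint_left]
  intro a h1 h2
  obtain ⟨u, v, -, -, rfl⟩ := (mem_halfE G w).1 h1
  obtain ⟨p, q, -, -, h⟩ := (mem_globE G w).1 h2
  simp [Sym2.eq_iff] at h

lemma disjEG [Fintype V] (M : Finset (Sym2 V)) :
    Disjoint (elimE G w M) (globE G w M) := by
  rw [Finset.disjoint_left]
  intro a h1 h2
  obtain ⟨u, v, -, -, -, rfl⟩ := (mem_elimE G w).1 h1
  obtain ⟨p, q, -, -, h⟩ := (mem_globE G w).1 h2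
  simp [Sym2.eq_iff] at h

lemma sum_kept (ρ : Finset (Sym2 V) → V → ℝ) (M : Finset (Sym2 V)) :
    ∑ x ∈ keptE G w M, sqW G w ρ x = ∑ e ∈ M.filter (fun e => ¬ InPSq G w e), w e := by
  rw [keptE, Finset.sum_image (fun x _ y _ h => Sym2.map.injective Sum.inl_injective h)]
  refine Finset.sum_congr rfl (fun e _ => ?_)
  obtain ⟨u, v, rfl⟩ := sym2_repr e
  rw [Sym2.map_pair_eq, sqW_kept]

lemma sum_half (ρ : Finset (Sym2 V) → V → ℝ)
    (hρ : ∀ a b c d : V, IsSquare4 G a b c d → ∀ x y : V,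
      (x = a ∨ x = b ∨ x = c ∨ x = d) → (y = a ∨ y = b ∨ y = c ∨ y = d) →
      G.Adj x y → w s(x, y) = ρ (sqEdges a b c d) x + ρ (sqEdges a b c d) y)
    (M : Finset (Sym2 V)) :
    ∑ x ∈ halfE G w M, sqW G w ρ x = ∑ e ∈ M.filter (fun e => InPSq G w e), w e := by
  rw [halfE, Finset.sum_biUnion]
  · refine Finset.sum_congr rfl (fun e he => ?_)
    rw [Finset.mem_filter] at he
    obtain ⟨u, v, rfl⟩ := sym2_repr e
    have hpq : InPSq G w s(u,v) := he.2
    have huv : u ≠ v := (InPSq_endpoints G w hpq).2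
    have hAB : (s(Sum.inl u, Sum.inr (NVS.sub u v)) : Sym2 (V ⊕ NVS V)) ≠
        s(Sum.inl v, Sum.inr (NVS.sub v u)) := by
      rw [Ne, Sym2.eq_iff]
      simp [huv]
    rw [halfPair_eval, Finset.sum_pair hAB, sqW_half, sqW_half,
      sqHalfW_eval G w ρ hpq, sqHalfW_eval G w ρ (InPSq_swap G w hpq),
      NOf_swap G w u v]
    exact half_weight G w ρ hρ hpq
  · intro e1 he1 e2 he2 hne
    refine Finset.disjoint_left.2 (fun x hx1 hx2 => hne ?_)
    obtain ⟨p, q, rfl, rfl⟩ := mem_halfPair.1 hx1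
    obtain ⟨p', q', rfl, h⟩ := mem_halfPair.1 hx2
    rw [Sym2.eq_iff] at h
    rcases h with ⟨h1, h2⟩|⟨h1, h2⟩
    · rw [Sum.inl.injEq] at h1
      rw [Sum.inr.injEq, NVS.sub.injEq] at h2
      rw [h1, h2.2]
    · simp at h1

lemma sum_elim [Fintype V] (ρ : Finset (Sym2 V) → V → ℝ) (M : Finset (Sym2 V)) :
    ∑ x ∈ elimE G w M, sqW G w ρ x = 0 := by
  refine Finset.sum_eq_zero (fun x hx => ?_)
  obtain ⟨p, q, -, -, -, rfl⟩ := (mem_elimE G w).1 hx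
  exact sqW_elim G w ρ p q

lemma sum_glob [Fintype V] (ρ : Finset (Sym2 V) → V → ℝ) (M : Finset (Sym2 V)) :
    ∑ x ∈ globE G w M, sqW G w ρ x = 0 := by
  refine Finset.sum_eq_zero (fun x hx => ?_)
  obtain ⟨p, q, -, -, rfl⟩ := (mem_globE G w).1 hx
  exact sqW_glob G w ρ _ _ p q

lemma sum_auxM [Fintype V] (ρ : Finset (Sym2 V) → V → ℝ)
    (hρ : ∀ a b c d : V, IsSquare4 G a b c d → ∀ x y : V,
      (x = a ∨ x = b ∨ x = c ∨ x = d) → (y = a ∨ y = b ∨ y = c ∨ y = d) →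
      G.Adj x y → w s(x, y) = ρ (sqEdges a b c d) x + ρ (sqEdges a b c d) y)
    (M : Finset (Sym2 V)) :
    ∑ x ∈ auxM G w M, sqW G w ρ x = ∑ e ∈ M, w e := by
  rw [auxM]
  rw [Finset.sum_union (by
    rw [Finset.disjoint_union_left, Finset.disjoint_union_left]
    exact ⟨⟨disjKG G w M, disjHG G w M⟩, disjEG G w M⟩)]
  rw [Finset.sum_union (by
    rw [Finset.disjoint_union_left]
    exact ⟨disjKE G w M, disjHE G w M⟩)]
  rw [Finset.sum_union (disjKH G w M)]
  rw [sum_kept G w ρ M, sum_half G w ρ hρ M, sum_elim G w ρ M, sum_glob G w ρ M,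
    add_zero, add_zero]
  rw [add_comm]
  exact Finset.sum_filter_add_sum_filter_not M _ w

end ProofAux

/-- For every square-free 2-matching `M` of `G` there is an
`(l,u)`-matching `M'` of the auxiliary graph `G'` with `w'(M') = w(M)`. -/
theorem square_free_to_lu_matching {V : Type*} [Fintype V] [DecidableEq V]
    (G : SimpleGraph V) [DecidableRel G.Adj]
    (hsub : ∀ v : V, G.degree v ≤ 3) (hK4 : ¬ HasK4Component G)
    (w : Sym2 V → ℝ) (hw : ∀ e, 0 ≤ w e)
    (ρ : Finset (Sym2 V) → V → ℝ)
    (hρ : ∀ a b c d : V, IsSquare4 G a b c d → ∀ x y : V,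
      (x = a ∨ x = b ∨ x = c ∨ x = d) → (y = a ∨ y = b ∨ y = c ∨ y = d) →
      G.Adj x y → w s(x, y) = ρ (sqEdges a b c d) x + ρ (sqEdges a b c d) y)
    (M : Finset (Sym2 V)) (hM : Is2Matching G M) (hSF : SquareFree G M) :
    ∃ M' : Finset (Sym2 (V ⊕ NVS V)), SqLU G w M' ∧
      ∑ e ∈ M', sqW G w ρ e = ∑ e ∈ M, w e := by
  refine ⟨auxM G w M, ⟨fun e he => auxM_subset_edgeSet G w hM.1 he, ?_⟩,
    sum_auxM G w ρ hρ M⟩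
  intro v hv
  rcases v with x | nv
  · exact ⟨Nat.zero_le _, deg_inl G w hM x⟩
  · cases nv with
    | sub p q =>
      have hd := deg_sub G w (M := M) hv
      exact ⟨le_of_eq hd.symm, le_of_eq hd⟩
    | globS P N =>
      have hd := deg_glob G w hSF hv
      exact ⟨le_of_eq hd.symm, le_of_eq hd⟩

end Paper
end

section
/- Let t=(a,c,d) be a triangle and s'=(c,d,e,f) a square of the subcubic graph G that share exactly one edge, namely (c,d), and assume the weight function w is vertex-induced on s'. If M1 is a 2-matching of G that contains all three edges of t, then there exists a 2-matching M2 of G with w(M2) ≥ w(M1) such that M2 does not contain all three edges of t, and every short cycle of G all of whose (native) edges lie in M2 also has all of its (native) edges in M1. -/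
/-!
Since `M₁` is a 2-matching containing the triangle `acd`, the vertices `a`, `c`, `d` are
saturated by triangle edges. Exchange the opposite square edges `cd`, `ef` for the other pair
`de`, `cf`: this removes weight at most `w(cd) + w(ef)` (`ef` need not lie in `M₁`), which by
vertex-inducedness equals the added weight `w(de) + w(cf)`. Each of `c`, `d`, `e`, `f` is
incident with a `G`-edge (`cd` or `ef`) missing from `M₂`, so subcubicity leaves it at most two
`M₂`-edges. In `M₂` the only way on from `d` other than `de` is `d – a – c – f`, which closes no
triangle or square through `de`; by symmetry the same holds for `cf`, so every short cycle of
`M₂` avoids the new edges.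
-/

open Finset
open scoped Classical

namespace Paper

variable {V : Type*}

lemma mem_triEdges [DecidableEq V] {t : Finset V} {p q : V} :
    s(p, q) ∈ triEdges t ↔ p ∈ t ∧ q ∈ t ∧ p ≠ q := by
  simp [triEdges, and_assoc]

lemma ne_of_card_eq_three [DecidableEq V] {x y z : V} (h : ({x, y, z} : Finset V).card = 3) :
    x ≠ y ∧ x ≠ z ∧ y ≠ z := by
  refine ⟨?_, ?_, ?_⟩ <;> rintro rfl <;> simp at h <;>
    exact absurd (h ▸ Finset.card_le_two) (by norm_num)

lemma exists_third_mem_of_card_eq_three [DecidableEq V] {t : Finset V} {p q : V}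
    (hcard : t.card = 3) (hp : p ∈ t) (hq : q ∈ t) (hpq : p ≠ q) :
    ∃ x ∈ t, x ≠ p ∧ x ≠ q := by
  obtain ⟨x, hx⟩ : ((t.erase p).erase q).Nonempty := by
    rw [← Finset.card_pos, Finset.card_erase_of_mem (Finset.mem_erase.mpr ⟨hpq.symm, hq⟩),
      Finset.card_erase_of_mem hp, hcard]
    norm_num
  simp only [Finset.mem_erase] at hx
  exact ⟨x, hx.2.2, hx.2.1, hx.1⟩

lemma ne_of_triEdges_inter_sqEdges [DecidableEq V] {a c d e f : V}
    (h : triEdges {a, c, d} ∩ sqEdges c d e f = {s(c, d)}) (hac : a ≠ c) (had : a ≠ d) :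
    a ≠ e ∧ a ≠ f := by
  constructor <;> rintro rfl
  · have had' : s(a, d) ∈ triEdges {a, c, d} ∩ sqEdges c d a f := by
      simp [mem_triEdges, sqEdges, had, Sym2.eq_swap]
    simp [h, hac, had] at had'
  · have hac' : s(a, c) ∈ triEdges {a, c, d} ∩ sqEdges c d e a := by
      simp [mem_triEdges, sqEdges, hac, Sym2.eq_swap]
    simp [h, hac, had] at hac'

lemma exists_path_of_mk_mem_sqEdges [DecidableEq V] {G : SimpleGraph V} {x y z u p q : V}
    (h : IsSquare4 G x y z u) (hpq : s(p, q) ∈ sqEdges x y z u) :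
    ∃ p' q', p' ≠ q ∧ q' ≠ p ∧ s(p, p') ∈ sqEdges x y z u ∧
      s(p', q') ∈ sqEdges x y z u ∧ s(q', q) ∈ sqEdges x y z u := by
  obtain ⟨hxy, hxz, hxu, hyz, hyu, hzu, -⟩ := h
  simp only [sqEdges, Finset.mem_insert, Finset.mem_singleton, Sym2.eq_iff] at hpq
  rcases hpq with (⟨rfl, rfl⟩ | ⟨rfl, rfl⟩) | (⟨rfl, rfl⟩ | ⟨rfl, rfl⟩) |
    (⟨rfl, rfl⟩ | ⟨rfl, rfl⟩) | (⟨rfl, rfl⟩ | ⟨rfl, rfl⟩) <;>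
    [use u, z; use z, u; use x, u; use u, x; use y, x; use x, y; use z, y; use y, z] <;>
    simp [sqEdges, Sym2.eq_swap, *, Ne.symm]

lemma degIn_le_degIn {M N : Finset (Sym2 V)} {v : V} (h : ∀ g ∈ N, v ∈ g → g ∈ M) :
    degIn N v ≤ degIn M v :=
  Finset.card_le_card fun g hg => by
    rw [Finset.mem_filter] at hg ⊢
    exact ⟨h g hg.1 hg.2, hg.2⟩

lemma degIn_le_two_of_adj_notMem [Fintype V] {G : SimpleGraph V} [DecidableRel G.Adj]
    {N : Finset (Sym2 V)} {v x : V} (hN : ∀ g ∈ N, g ∈ G.edgeSet) (hdeg : G.degree v ≤ 3)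
    (hvx : G.Adj v x) (hx : s(v, x) ∉ N) : degIn N v ≤ 2 := by
  have hsub : N.filter (fun g => v ∈ g) ⊆ (G.incidenceFinset v).erase s(v, x) := by
    intro g hg
    rw [Finset.mem_filter] at hg
    rw [Finset.mem_erase, SimpleGraph.mem_incidenceFinset]
    exact ⟨fun h => hx (h ▸ hg.1), hN g hg.1, hg.2⟩
  have := Finset.card_le_card hsub
  rw [Finset.card_erase_of_mem (by simpa using hvx), SimpleGraph.card_incidenceFinset_eq_degree]
    at this
  unfold degIn
  omega

lemma sum_le_sum_sdiff_union [DecidableEq V] {w : Sym2 V → ℝ} (hw : ∀ e, 0 ≤ w e)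
    {M S T : Finset (Sym2 V)} (hT : Disjoint M T) (hST : ∑ g ∈ S, w g ≤ ∑ g ∈ T, w g) :
    ∑ g ∈ M, w g ≤ ∑ g ∈ M \ S ∪ T, w g := by
  rw [Finset.sum_union (hT.mono_left Finset.sdiff_subset), ← Finset.sum_inter_add_sum_sdiff M S]
  have : ∑ g ∈ M ∩ S, w g ≤ ∑ g ∈ S, w g :=
    Finset.sum_le_sum_of_subset_of_nonneg Finset.inter_subset_right fun g _ _ => hw g
  linarith

def NeighborsAmong (M : Finset (Sym2 V)) (v x y : V) : Prop :=
  ∀ u, s(v, u) ∈ M → u = x ∨ u = y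

namespace NeighborsAmong

variable {M : Finset (Sym2 V)} {v x y : V}

lemma symm (h : NeighborsAmong M v x y) : NeighborsAmong M v y x :=
  fun u hu => (h u hu).symm

lemma mk_notMem (h : NeighborsAmong M v x y) {u : V} (hux : u ≠ x) (huy : u ≠ y) :
    s(v, u) ∉ M :=
  fun hu => (h u hu).elim hux huy

end NeighborsAmong

lemma neighborsAmong_of_degIn_le_two {M : Finset (Sym2 V)} {v x y : V} (h : degIn M v ≤ 2)
    (hx : s(v, x) ∈ M) (hy : s(v, y) ∈ M) (hxy : x ≠ y) : NeighborsAmong M v x y := by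
  intro u hu
  by_contra! hne
  have hsub :
      ({s(v, x), s(v, y), s(v, u)} : Finset (Sym2 V)) ⊆ M.filter (fun g => v ∈ g) := by
    intro g hg
    simp only [Finset.mem_insert, Finset.mem_singleton] at hg
    rcases hg with rfl | rfl | rfl <;> simp [*]
  have hcard : ({s(v, x), s(v, y), s(v, u)} : Finset (Sym2 V)).card = 3 :=
    Finset.card_eq_three.mpr ⟨_, _, _, mt Sym2.congr_right.mp hxy,
      mt Sym2.congr_right.mp hne.1.symm, mt Sym2.congr_right.mp hne.2.symm, rfl⟩
  have := Finset.card_le_card hsub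
  unfold degIn at h
  omega

lemma neighborsAmong_of_triEdges_subset [DecidableEq V] {M : Finset (Sym2 V)} {a c d : V}
    (hM : ∀ v, degIn M v ≤ 2) (hac : a ≠ c) (had : a ≠ d) (hcd : c ≠ d)
    (htM : triEdges {a, c, d} ⊆ M) :
    NeighborsAmong M a c d ∧ NeighborsAmong M c a d ∧ NeighborsAmong M d a c := by
  have hmem : ∀ {x y}, x ∈ ({a, c, d} : Finset V) → y ∈ ({a, c, d} : Finset V) →
      x ≠ y → s(x, y) ∈ M := fun hx hy hxy => htM (mem_triEdges.mpr ⟨hx, hy, hxy⟩)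
  refine ⟨?_, ?_, ?_⟩ <;>
    refine neighborsAmong_of_degIn_le_two (hM _) (hmem ?_ ?_ ?_) (hmem ?_ ?_ ?_) ?_ <;>
    simp [*, Ne.symm]

lemma not_triEdges_subset [DecidableEq V] {M : Finset (Sym2 V)} {t : Finset V} {a d e : V}
    (ht : t.card = 3) (hde : s(d, e) ∈ triEdges t) (hd : NeighborsAmong M d a e)
    (hae : s(a, e) ∉ M) : ¬ triEdges t ⊆ M := by
  intro htM
  obtain ⟨hdt, het, hne⟩ := mem_triEdges.mp hde
  obtain ⟨x, hxt, hxd, hxe⟩ := exists_third_mem_of_card_eq_three ht hdt het hne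
  obtain rfl : x = a :=
    (hd x (htM (mem_triEdges.mpr ⟨hdt, hxt, hxd.symm⟩))).resolve_right hxe
  exact hae (htM (mem_triEdges.mpr ⟨hxt, het, hxe⟩))

lemma not_sqEdges_subset [DecidableEq V] {G : SimpleGraph V} {M : Finset (Sym2 V)}
    {x y z u a c d e : V} (hs : IsSquare4 G x y z u) (hde : s(d, e) ∈ sqEdges x y z u)
    (hd : NeighborsAmong M d a e) (ha : NeighborsAmong M a c d) (hce : s(c, e) ∉ M) :
    ¬ sqEdges x y z u ⊆ M := by
  intro hsM
  obtain ⟨p, q, hpe, hqd, hdp, hpq, hqe⟩ := exists_path_of_mk_mem_sqEdges hs hde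
  obtain rfl : p = a := (hd p (hsM hdp)).resolve_right hpe
  obtain rfl : q = c := (ha q (hsM hpq)).resolve_right hqd
  exact hce (hsM hqe)

section SquareSwap

variable [DecidableEq V] {M : Finset (Sym2 V)} {a c d e f : V}

def squareSwap (M : Finset (Sym2 V)) (c d e f : V) : Finset (Sym2 V) :=
  M \ {s(c, d), s(e, f)} ∪ {s(d, e), s(c, f)}

lemma mem_squareSwap {g : Sym2 V} : g ∈ squareSwap M c d e f ↔
    (g ∈ M ∧ g ≠ s(c, d) ∧ g ≠ s(e, f)) ∨ g = s(d, e) ∨ g = s(c, f) := by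
  simp only [squareSwap, Finset.mem_union, Finset.mem_sdiff, Finset.mem_insert,
    Finset.mem_singleton]
  tauto

lemma squareSwap_comm : squareSwap M d c f e = squareSwap M c d e f := by
  simp only [squareSwap, Sym2.eq_swap (a := d), Sym2.eq_swap (a := f), Finset.pair_comm]

lemma mem_of_mem_squareSwap {g : Sym2 V} {v : V} (hg : g ∈ squareSwap M c d e f) (hv : v ∈ g)
    (hvc : v ≠ c) (hvd : v ≠ d) (hve : v ≠ e) (hvf : v ≠ f) : g ∈ M := by
  rcases mem_squareSwap.mp hg with ⟨hg, -⟩ | rfl | rfl <;> simp_all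

lemma mk_notMem_squareSwap (hce : c ≠ e) (hdf : d ≠ f) :
    s(c, d) ∉ squareSwap M c d e f ∧ s(e, f) ∉ squareSwap M c d e f := by
  simp only [mem_squareSwap, Sym2.eq_iff]
  grind

lemma subset_of_subset_squareSwap {S : Finset (Sym2 V)} (h : S ⊆ squareSwap M c d e f)
    (hde : s(d, e) ∉ S) (hcf : s(c, f) ∉ S) : S ⊆ M := fun g hg => by
  rcases mem_squareSwap.mp (h hg) with ⟨hgM, -⟩ | rfl | rfl
  exacts [hgM, absurd hg hde, absurd hg hcf]

lemma NeighborsAmong.squareSwap_of_ne (h : NeighborsAmong M a c d) (hac : a ≠ c) (had : a ≠ d)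
    (hae : a ≠ e) (haf : a ≠ f) : NeighborsAmong (squareSwap M c d e f) a c d :=
  fun u hu => h u (mem_of_mem_squareSwap hu (Sym2.mem_mk_left a u) hac had hae haf)

lemma NeighborsAmong.squareSwap (h : NeighborsAmong M d a c) (hdc : d ≠ c) (hdf : d ≠ f) :
    NeighborsAmong (squareSwap M c d e f) d a e := by
  intro u hu
  rcases mem_squareSwap.mp hu with ⟨hu, hne, -⟩ | h | h
  · exact (h u hu).imp_right fun huc => absurd (huc ▸ Sym2.eq_swap) hne
  · exact .inr (Sym2.congr_right.mp h)
  · simp_all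

lemma is2Matching_squareSwap [Fintype V] {G : SimpleGraph V} [DecidableRel G.Adj]
    (hdeg : ∀ v, G.degree v ≤ 3) (hM : Is2Matching G M) (hs : IsSquare4 G c d e f) :
    Is2Matching G (squareSwap M c d e f) := by
  obtain ⟨-, hce, -, -, hdf, -, hcd, hde, hef, hfc⟩ := hs
  obtain ⟨hcd', hef'⟩ := mk_notMem_squareSwap (M := M) hce hdf
  have hE : ∀ g ∈ squareSwap M c d e f, g ∈ G.edgeSet := by
    intro g hg
    rcases mem_squareSwap.mp hg with ⟨hg, -⟩ | rfl | rfl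
    exacts [hM.1 g hg, hde, hfc.symm]
  refine ⟨hE, fun v => ?_⟩
  by_cases hv : v = c ∨ v = d ∨ v = e ∨ v = f
  · rcases hv with rfl | rfl | rfl | rfl
    · exact degIn_le_two_of_adj_notMem hE (hdeg _) hcd hcd'
    · exact degIn_le_two_of_adj_notMem hE (hdeg _) hcd.symm (Sym2.eq_swap ▸ hcd')
    · exact degIn_le_two_of_adj_notMem hE (hdeg _) hef hef'
    · exact degIn_le_two_of_adj_notMem hE (hdeg _) hef.symm (Sym2.eq_swap ▸ hef')
  · simp only [not_or] at hv
    obtain ⟨hvc, hvd, hve, hvf⟩ := hv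
    exact (degIn_le_degIn fun g hg hvg => mem_of_mem_squareSwap hg hvg hvc hvd hve hvf).trans
      (hM.2 v)

end SquareSwap

/-- Let `t = (a,c,d)` be a triangle and `s' = (c,d,e,f)` a
square of a subcubic graph `G` sharing exactly the edge `(c,d)`, and let `w`
be vertex-induced on `s'`. If `M₁` is a 2-matching of `G` containing all
three edges of `t`, then there is a 2-matching `M₂` with `w(M₂) ≥ w(M₁)` that
does not contain all three edges of `t`, and every short cycle (triangle or
square) of `G` all of whose (native) edges lie in `M₂` also has all of its
(native) edges in `M₁`. -/
theorem remove_triangle_sharing_one_edge_with_square {V : Type*} [Fintype V] [DecidableEq V]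
    (G : SimpleGraph V) [DecidableRel G.Adj]
    (hsub : ∀ v : V, G.degree v ≤ 3)
    (w : Sym2 V → ℝ) (hw : ∀ e, 0 ≤ w e)
    (a c d e f : V)
    (ht : IsTriangle G {a, c, d}) (hs' : IsSquare4 G c d e f)
    (hshare : triEdges {a, c, d} ∩ sqEdges c d e f = {s(c, d)})
    (hvi : ∃ r : V → ℝ, ∀ x y : V, (x = c ∨ x = d ∨ x = e ∨ x = f) →
      (y = c ∨ y = d ∨ y = e ∨ y = f) → G.Adj x y → w s(x, y) = r x + r y)
    (M₁ : Finset (Sym2 V)) (hM₁ : Is2Matching G M₁)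
    (htM₁ : triEdges {a, c, d} ⊆ M₁) :
    ∃ M₂ : Finset (Sym2 V), Is2Matching G M₂ ∧
      ∑ e' ∈ M₁, w e' ≤ ∑ e' ∈ M₂, w e' ∧
      ¬ triEdges {a, c, d} ⊆ M₂ ∧
      (∀ t : Finset V, IsTriangle G t → triEdges t ⊆ M₂ → triEdges t ⊆ M₁) ∧
      (∀ x y z u : V, IsSquare4 G x y z u → sqEdges x y z u ⊆ M₂ →
        sqEdges x y z u ⊆ M₁) := by
  have ⟨hcd, hce, hcf, hde, hdf, hef, hAcd, hAde, hAef, hAfc⟩ := hs'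
  obtain ⟨hac, had, -⟩ := ne_of_card_eq_three ht.1
  obtain ⟨hae, haf⟩ := ne_of_triEdges_inter_sqEdges hshare hac had
  obtain ⟨hA₁, hC₁, hD₁⟩ := neighborsAmong_of_triEdges_subset hM₁.2 hac had hcd htM₁
  have hA₂ := hA₁.squareSwap_of_ne (e := e) (f := f) hac had hae haf
  have hC₂ : NeighborsAmong (squareSwap M₁ c d e f) c a f := by
    rw [← squareSwap_comm]
    exact hC₁.squareSwap hcd hce
  have hD₂ := hD₁.squareSwap (e := e) hcd.symm hdf
  have hbal : w s(c, d) + w s(e, f) ≤ w s(d, e) + w s(c, f) := by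
    obtain ⟨r, hr⟩ := hvi
    rw [hr c d (by tauto) (by tauto) hAcd, hr e f (by tauto) (by tauto) hAef,
      hr d e (by tauto) (by tauto) hAde, hr c f (by tauto) (by tauto) hAfc.symm]
    linarith
  refine ⟨squareSwap M₁ c d e f, is2Matching_squareSwap hsub hM₁ hs',
    sum_le_sum_sdiff_union hw ?_ ?_, fun h => ?_, fun t ht' h => ?_, fun x y z u hs h => ?_⟩
  · simp only [Finset.disjoint_insert_right, Finset.disjoint_singleton_right]
    exact ⟨hD₁.mk_notMem hae.symm hce.symm, hC₁.mk_notMem haf.symm hdf.symm⟩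
  · rwa [Finset.sum_pair (show s(c, d) ≠ s(e, f) by simp [hce, hcf]),
      Finset.sum_pair (show s(d, e) ≠ s(c, f) by simp [hcd.symm, hdf])]
  · exact (mk_notMem_squareSwap hce hdf).1 (h (mem_triEdges.mpr ⟨by simp, by simp, hcd⟩))
  · exact subset_of_subset_squareSwap h
      (fun hde' => not_triEdges_subset ht'.1 hde' hD₂ (hA₂.mk_notMem hce.symm hde.symm) h)
      (fun hcf' => not_triEdges_subset ht'.1 hcf' hC₂ (hA₂.mk_notMem hcf.symm hdf.symm) h)
  · exact subset_of_subset_squareSwap h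
      (fun hde' => not_sqEdges_subset hs hde' hD₂ hA₂ (hC₂.mk_notMem hae.symm hef) h)
      (fun hcf' =>
        not_sqEdges_subset hs hcf' hC₂ hA₂.symm (hD₂.mk_notMem haf.symm hef.symm) h)

end Paper
end

section
/- Let C1 and C2 be two distinct problematic short cycles of G that are not vertex-disjoint. Then one of them is a triangle t and the other is a square s, and there exist four distinct vertices a, b, c, d of G such that t=(a,c,d), s is the 4-cycle (a,c,b,d), t and s share exactly the two edges (a,c) and (a,d), and the subgraph of G induced on {a,b,c,d} has edge set exactly {(c,d),(a,c),(a,d),(b,c),(b,d)} (in particular (a,b) is not an edge of G); such a configuration is called a double triangle. -/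
open Finset
open scoped Classical

namespace Paper

variable {V : Type*}

/-- A short cycle of a graph: a triangle `(a, b, c)` or a square `(a, b, c, d)`. -/
inductive ShortCycle (V : Type*) where
  | tri : V → V → V → ShortCycle V
  | sq : V → V → V → V → ShortCycle V

section SC

variable [DecidableEq V]

/-- The (native) edges of a short cycle. -/
def scEdges : ShortCycle V → Finset (Sym2 V)
  | ShortCycle.tri a b c => {s(a, b), s(b, c), s(c, a)}
  | ShortCycle.sq a b c d => sqEdges a b c d

/-- The vertices of a short cycle. -/
def scVerts : ShortCycle V → Finset V
  | ShortCycle.tri a b c => {a, b, c}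
  | ShortCycle.sq a b c d => {a, b, c, d}

/-- The given short cycle is an actual short cycle of `G`. -/
def IsSC (G : SimpleGraph V) : ShortCycle V → Prop
  | ShortCycle.tri a b c => a ≠ b ∧ a ≠ c ∧ b ≠ c ∧ G.Adj a b ∧ G.Adj b c ∧ G.Adj c a
  | ShortCycle.sq a b c d => IsSquare4 G a b c d

/-- The short cycle `C` is unproblematic: `C` shares exactly one edge with some
square of `G`, or `C` is a triangle and some other triangle `t'` shares an
edge with `C` and `w(C) ≤ w(t')`, or `C` is a square and some other square
`s'` shares two edges with `C` and `w(C) ≤ w(s')`. -/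
def scUnprob (G : SimpleGraph V) (w : Sym2 V → ℝ) (C : ShortCycle V) : Prop :=
  (∃ x y z u : V, IsSquare4 G x y z u ∧ sqEdges x y z u ≠ scEdges C ∧
    (scEdges C ∩ sqEdges x y z u).card = 1) ∨
  (match C with
   | ShortCycle.tri a b c =>
       ∃ t' : Finset V, IsTriangle G t' ∧ t' ≠ ({a, b, c} : Finset V) ∧
         (scEdges (ShortCycle.tri a b c) ∩ triEdges t').Nonempty ∧
         ∑ e ∈ scEdges (ShortCycle.tri a b c), w e ≤ ∑ e ∈ triEdges t', w e
   | ShortCycle.sq a b c d =>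
       ∃ x y z u : V, IsSquare4 G x y z u ∧ sqEdges x y z u ≠ sqEdges a b c d ∧
         (sqEdges a b c d ∩ sqEdges x y z u).card = 2 ∧
         ∑ e ∈ sqEdges a b c d, w e ≤ ∑ e ∈ sqEdges x y z u, w e)

end SC


/-!
Two short cycles through a common vertex of degree at most 3 each use two of its edges, so they
share an edge. A problematic cycle shares exactly one edge with no square, and two problematic
cycles sharing edges cannot be compared by weight in either direction; this rules out two
triangles, and two squares sharing two edges. Two distinct squares never share three edges,
since three consecutive edges of a 4-cycle determine the fourth. What is left is a triangle
`acd` sharing the edges `ac` and `ad` with a square, which is then `acbd`; finally `ab` is not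
an edge, for otherwise `{a, b, c, d}` would span a `K₄` all of whose vertices have degree 3,
i.e. a `K₄` component.
-/

section CyclicFinset

variable {α : Type*} [DecidableEq α] {e₁ e₂ e₃ e₄ : α} {T : Finset α}

theorem two_consecutive_mem_of_two_le_card_inter
    (h : 2 ≤ (({e₁, e₂, e₃} : Finset α) ∩ T).card) :
    (e₁ ∈ T ∧ e₂ ∈ T) ∨ (e₂ ∈ T ∧ e₃ ∈ T) ∨ (e₃ ∈ T ∧ e₁ ∈ T) := by
  by_contra! hT
  have hle : (({e₁, e₂, e₃} : Finset α) ∩ T).card ≤ 1 := by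
    by_cases h₁ : e₁ ∈ T <;> by_cases h₂ : e₂ ∈ T <;> by_cases h₃ : e₃ ∈ T <;>
      simp_all [insert_inter_of_mem, insert_inter_of_notMem, singleton_inter_of_mem,
        singleton_inter_of_notMem]
  omega

theorem three_consecutive_mem_of_three_le_card_inter
    (h : 3 ≤ (({e₁, e₂, e₃, e₄} : Finset α) ∩ T).card) :
    (e₁ ∈ T ∧ e₂ ∈ T ∧ e₃ ∈ T) ∨ (e₂ ∈ T ∧ e₃ ∈ T ∧ e₄ ∈ T) ∨
      (e₃ ∈ T ∧ e₄ ∈ T ∧ e₁ ∈ T) ∨ (e₄ ∈ T ∧ e₁ ∈ T ∧ e₂ ∈ T) := by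
  by_contra! hT
  have hle : (({e₁, e₂, e₃, e₄} : Finset α) ∩ T).card ≤ 2 := by
    by_cases h₁ : e₁ ∈ T <;> by_cases h₂ : e₂ ∈ T <;> by_cases h₃ : e₃ ∈ T <;>
      by_cases h₄ : e₄ ∈ T <;>
      simp_all [insert_inter_of_mem, insert_inter_of_notMem, singleton_inter_of_mem,
        singleton_inter_of_notMem, card_le_two]
  omega

end CyclicFinset

section Square

variable {G : SimpleGraph V}

theorem IsSquare4.rotate {a b c d : V} (h : IsSquare4 G a b c d) : IsSquare4 G b c d a := by
  obtain ⟨hab, hac, had, hbc, hbd, hcd, eab, ebc, ecd, eda⟩ := h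
  exact ⟨hbc, hbd, hab.symm, hcd, hac.symm, had.symm, ebc, ecd, eda, eab⟩

theorem IsSquare4.reverse {a b c d : V} (h : IsSquare4 G a b c d) : IsSquare4 G d c b a := by
  obtain ⟨hab, hac, had, hbc, hbd, hcd, eab, ebc, ecd, eda⟩ := h
  exact ⟨hcd.symm, hbd.symm, had.symm, hbc.symm, hac.symm, hab.symm,
    ecd.symm, ebc.symm, eab.symm, eda.symm⟩

variable [DecidableEq V]

theorem sqEdges_rotate (a b c d : V) : sqEdges a b c d = sqEdges b c d a := by
  ext e; simp only [sqEdges, mem_insert, mem_singleton]; tauto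

theorem sqEdges_reverse (a b c d : V) : sqEdges a b c d = sqEdges d c b a := by
  ext e
  simp only [sqEdges, mem_insert, mem_singleton]
  constructor <;> rintro (rfl | rfl | rfl | rfl) <;> simp [Sym2.eq_swap]

theorem exists_isSquare4_of_mem_sqEdges {x y z u p q : V} (hs : IsSquare4 G x y z u)
    (h : s(p, q) ∈ sqEdges x y z u) :
    ∃ r t : V, IsSquare4 G p q r t ∧ sqEdges p q r t = sqEdges x y z u := by
  simp only [sqEdges, mem_insert, mem_singleton, Sym2.eq_iff] at h
  rcases h with (⟨rfl, rfl⟩ | ⟨rfl, rfl⟩) | (⟨rfl, rfl⟩ | ⟨rfl, rfl⟩) |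
    (⟨rfl, rfl⟩ | ⟨rfl, rfl⟩) | (⟨rfl, rfl⟩ | ⟨rfl, rfl⟩)
  · exact ⟨z, u, hs, rfl⟩
  · exact ⟨u, z, hs.reverse.rotate.rotate,
      by rw [sqEdges_reverse, sqEdges_rotate, sqEdges_rotate]⟩
  · exact ⟨u, x, hs.rotate, (sqEdges_rotate _ _ _ _).symm⟩
  · exact ⟨x, u, hs.reverse.rotate, by rw [sqEdges_reverse, sqEdges_rotate]⟩
  · exact ⟨x, y, hs.rotate.rotate, by rw [sqEdges_rotate, sqEdges_rotate]⟩
  · exact ⟨y, x, hs.reverse, (sqEdges_reverse _ _ _ _).symm⟩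
  · exact ⟨y, z, hs.rotate.rotate.rotate, sqEdges_rotate _ _ _ _⟩
  · exact ⟨z, y, hs.reverse.rotate.rotate.rotate,
      by rw [sqEdges_reverse]; exact (sqEdges_rotate _ _ _ _).symm⟩

theorem exists_isSquare4_of_mem_sqEdges_of_mem_sqEdges {x y z u p q r : V}
    (hs : IsSquare4 G x y z u) (hqr : q ≠ r)
    (hpq : s(p, q) ∈ sqEdges x y z u) (hpr : s(p, r) ∈ sqEdges x y z u) :
    ∃ t : V, IsSquare4 G p q t r ∧ sqEdges p q t r = sqEdges x y z u := by
  obtain ⟨t, v, hs', hS⟩ := exists_isSquare4_of_mem_sqEdges hs hpq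
  rw [← hS] at hpr
  have hrv : r = v := by
    obtain ⟨hpq', hpt, hpv, -⟩ := hs'
    simp only [sqEdges, mem_insert, mem_singleton, Sym2.eq_iff] at hpr
    grind
  subst hrv
  exact ⟨t, hs', hS⟩

theorem sqEdges_eq_of_path_mem {a b c d x y z u : V} (h₁ : IsSquare4 G a b c d)
    (h₂ : IsSquare4 G x y z u) (hab : s(a, b) ∈ sqEdges x y z u)
    (hbc : s(b, c) ∈ sqEdges x y z u) (hcd : s(c, d) ∈ sqEdges x y z u) :
    sqEdges x y z u = sqEdges a b c d := by
  obtain ⟨hab', hac, had, hbc', hbd, hcd'⟩ := h₁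
  obtain ⟨t, ht, hS⟩ := exists_isSquare4_of_mem_sqEdges_of_mem_sqEdges h₂ hac
    (Sym2.eq_swap ▸ hab) hbc
  rw [← hS] at hcd ⊢
  have hdt : d = t := by
    simp only [sqEdges, mem_insert, mem_singleton, Sym2.eq_iff] at hcd
    grind
  rw [hdt, sqEdges_reverse, sqEdges_rotate, sqEdges_rotate]

theorem sqEdges_eq_of_three_le_card_inter {a b c d x y z u : V} (h₁ : IsSquare4 G a b c d)
    (h₂ : IsSquare4 G x y z u) (h : 3 ≤ (sqEdges a b c d ∩ sqEdges x y z u).card) :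
    sqEdges x y z u = sqEdges a b c d := by
  rcases three_consecutive_mem_of_three_le_card_inter h with
    ⟨hab, hbc, hcd⟩ | ⟨hbc, hcd, hda⟩ | ⟨hcd, hda, hab⟩ | ⟨hda, hab, hbc⟩
  · exact sqEdges_eq_of_path_mem h₁ h₂ hab hbc hcd
  · rw [sqEdges_rotate a]
    exact sqEdges_eq_of_path_mem h₁.rotate h₂ hbc hcd hda
  · rw [sqEdges_rotate a, sqEdges_rotate b]
    exact sqEdges_eq_of_path_mem h₁.rotate.rotate h₂ hcd hda hab
  · rw [sqEdges_rotate a, sqEdges_rotate b, sqEdges_rotate c]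
    exact sqEdges_eq_of_path_mem h₁.rotate.rotate.rotate h₂ hda hab hbc

end Square

section Degree
variable [DecidableEq V] {G : SimpleGraph V} [G.LocallyFinite]

theorem eq_or_eq_or_eq_of_adj_of_degree_le_three {x u v w y : V} (hx : G.degree x ≤ 3)
    (huv : u ≠ v) (huw : u ≠ w) (hvw : v ≠ w)
    (hu : G.Adj x u) (hv : G.Adj x v) (hw : G.Adj x w) (hy : G.Adj x y) :
    y = u ∨ y = v ∨ y = w := by
  have hsub : ({u, v, w} : Finset V) ⊆ G.neighborFinset x := by
    simp [insert_subset_iff, hu, hv, hw]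
  have hcard : ({u, v, w} : Finset V).card = 3 := card_eq_three.2 ⟨u, v, w, huv, huw, hvw, rfl⟩
  have heq : G.neighborFinset x = {u, v, w} :=
    (eq_of_subset_of_card_le hsub (by rwa [hcard, SimpleGraph.card_neighborFinset_eq_degree])).symm
  simpa [heq] using (G.mem_neighborFinset x y).2 hy

end Degree

def IsDoubleTriangle (G : SimpleGraph V) (a b c d : V) : Prop :=
  a ≠ b ∧ a ≠ c ∧ a ≠ d ∧ b ≠ c ∧ b ≠ d ∧ c ≠ d ∧
    G.Adj c d ∧ G.Adj a c ∧ G.Adj a d ∧ G.Adj b c ∧ G.Adj b d ∧ ¬ G.Adj a b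

def FormsDoubleTriangle [DecidableEq V] (G : SimpleGraph V) (T S : Finset (Sym2 V)) : Prop :=
  ∃ a b c d : V, IsDoubleTriangle G a b c d ∧ T = {s(a, c), s(c, d), s(d, a)} ∧
    S = {s(a, c), s(c, b), s(b, d), s(d, a)} ∧ T ∩ S = {s(a, c), s(a, d)}

section DoubleTriangle
variable [DecidableEq V] {G : SimpleGraph V} [G.LocallyFinite]

theorem isDoubleTriangle_of_adj (hsub : ∀ v : V, G.degree v ≤ 3) (hK4 : ¬ HasK4Component G)
    {a b c d : V} (hab : a ≠ b) (hac : a ≠ c) (had : a ≠ d) (hbc : b ≠ c) (hbd : b ≠ d)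
    (hcd : c ≠ d) (ecd : G.Adj c d) (eac : G.Adj a c) (ead : G.Adj a d) (ebc : G.Adj b c)
    (ebd : G.Adj b d) : IsDoubleTriangle G a b c d := by
  refine ⟨hab, hac, had, hbc, hbd, hcd, ecd, eac, ead, ebc, ebd, fun eab => hK4 ?_⟩
  refine ⟨a, b, c, d, hab, hac, had, hbc, hbd, hcd, eab, eac, ead, ebc, ebd, ecd, ?_⟩
  rintro x y (rfl | rfl | rfl | rfl) hxy
  · have := eq_or_eq_or_eq_of_adj_of_degree_le_three (hsub x) hbc hbd hcd eab eac ead hxy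
    tauto
  · have := eq_or_eq_or_eq_of_adj_of_degree_le_three (hsub x) hac had hcd eab.symm ebc ebd hxy
    tauto
  · have := eq_or_eq_or_eq_of_adj_of_degree_le_three (hsub x) hab had hbd eac.symm ebc.symm ecd
      hxy
    tauto
  · have := eq_or_eq_or_eq_of_adj_of_degree_le_three (hsub x) hab hac hbc ead.symm ebd.symm
      ecd.symm hxy
    tauto

theorem formsDoubleTriangle_of_mem_sqEdges (hsub : ∀ v : V, G.degree v ≤ 3)
    (hK4 : ¬ HasK4Component G) {a b c x y z u : V} (ht : IsSC G (.tri a b c))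
    (hs : IsSquare4 G x y z u) (hab : s(a, b) ∈ sqEdges x y z u)
    (hac : s(a, c) ∈ sqEdges x y z u) :
    FormsDoubleTriangle G (scEdges (.tri a b c)) (sqEdges x y z u) := by
  obtain ⟨hab', hac', hbc', eab, ebc, eca⟩ := ht
  obtain ⟨t, hs', hS⟩ := exists_isSquare4_of_mem_sqEdges_of_mem_sqEdges hs hbc' hab hac
  rw [← hS]
  obtain ⟨-, hat, -, hbt, -, htc, -, ebt, etc, -⟩ := hs'
  refine ⟨a, t, b, c, isDoubleTriangle_of_adj hsub hK4 hat hab' hac' hbt.symm htc hbc' ebc eab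
    eca.symm ebt.symm etc, rfl, rfl, ?_⟩
  ext e
  induction e using Sym2.ind
  simp only [scEdges, sqEdges, mem_inter, mem_insert, mem_singleton, Sym2.eq_iff]
  grind

end DoubleTriangle

section ShortCycles
variable {G : SimpleGraph V}

theorem IsSC.tri_rotate {a b c : V} (h : IsSC G (.tri a b c)) : IsSC G (.tri b c a) := by
  obtain ⟨hab, hac, hbc, eab, ebc, eca⟩ := h
  exact ⟨hbc, hab.symm, hac.symm, ebc, eca, eab⟩

variable [DecidableEq V]

theorem scEdges_tri_rotate (a b c : V) :
    scEdges (.tri a b c) = scEdges (.tri b c a) := by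
  ext e; simp only [scEdges, mem_insert, mem_singleton]; tauto

theorem triEdges_insert {a b c : V} (hab : a ≠ b) (hac : a ≠ c) (hbc : b ≠ c) :
    triEdges ({a, b, c} : Finset V) = scEdges (.tri a b c) := by
  ext e
  induction e using Sym2.ind
  simp only [triEdges, scEdges, mem_filter, mk_mem_sym2_iff, Sym2.mk_isDiag_iff, mem_insert,
    mem_singleton, Sym2.eq_iff]
  grind

theorem IsSC.isTriangle {a b c : V} (h : IsSC G (.tri a b c)) :
    IsTriangle G ({a, b, c} : Finset V) := by
  obtain ⟨hab, hac, hbc, eab, ebc, eca⟩ := h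
  refine ⟨card_eq_three.2 ⟨a, b, c, hab, hac, hbc, rfl⟩, ?_⟩
  simp only [mem_insert, mem_singleton]
  rintro x (rfl | rfl | rfl) y (rfl | rfl | rfl) hxy <;>
    first | exact (hxy rfl).elim | assumption | exact SimpleGraph.Adj.symm ‹_›

theorem IsSC.exists_two_edges_at {C : ShortCycle V} (h : IsSC G C) {v : V}
    (hv : v ∈ scVerts C) :
    ∃ n₁ n₂ : V, n₁ ≠ n₂ ∧ G.Adj v n₁ ∧ G.Adj v n₂ ∧
      s(v, n₁) ∈ scEdges C ∧ s(v, n₂) ∈ scEdges C := by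
  cases C with
  | tri a b c =>
    obtain ⟨hab, hac, hbc, eab, ebc, eca⟩ := h
    simp only [scVerts, mem_insert, mem_singleton] at hv
    rcases hv with rfl | rfl | rfl
    · exact ⟨b, c, hbc, eab, eca.symm, by simp [scEdges], by simp [scEdges, Sym2.eq_swap]⟩
    · exact ⟨a, c, hac, eab.symm, ebc, by simp [scEdges, Sym2.eq_swap], by simp [scEdges]⟩
    · exact ⟨a, b, hab, eca, ebc.symm, by simp [scEdges], by simp [scEdges, Sym2.eq_swap]⟩
  | sq a b c d =>
    obtain ⟨hab, hac, had, hbc, hbd, hcd, eab, ebc, ecd, eda⟩ := h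
    simp only [scVerts, mem_insert, mem_singleton] at hv
    rcases hv with rfl | rfl | rfl | rfl
    · exact ⟨b, d, hbd, eab, eda.symm, by simp [scEdges, sqEdges],
        by simp [scEdges, sqEdges, Sym2.eq_swap]⟩
    · exact ⟨a, c, hac, eab.symm, ebc, by simp [scEdges, sqEdges, Sym2.eq_swap],
        by simp [scEdges, sqEdges]⟩
    · exact ⟨b, d, hbd, ebc.symm, ecd, by simp [scEdges, sqEdges, Sym2.eq_swap],
        by simp [scEdges, sqEdges]⟩
    · exact ⟨c, a, hac.symm, ecd.symm, eda, by simp [scEdges, sqEdges, Sym2.eq_swap],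
        by simp [scEdges, sqEdges]⟩

theorem scEdges_inter_nonempty [G.LocallyFinite] (hsub : ∀ v : V, G.degree v ≤ 3)
    {C₁ C₂ : ShortCycle V} (h₁ : IsSC G C₁) (h₂ : IsSC G C₂)
    (hmeet : ¬ Disjoint (scVerts C₁) (scVerts C₂)) :
    (scEdges C₁ ∩ scEdges C₂).Nonempty := by
  obtain ⟨v, hv₁, hv₂⟩ := not_disjoint_iff.1 hmeet
  obtain ⟨n₁, n₂, hn, hvn₁, hvn₂, hn₁, hn₂⟩ := h₁.exists_two_edges_at hv₁
  obtain ⟨m₁, m₂, hm, hvm₁, hvm₂, hm₁, hm₂⟩ := h₂.exists_two_edges_at hv₂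
  have shared : ∀ m, s(v, m) ∈ scEdges C₂ → m = n₁ ∨ m = n₂ →
      (scEdges C₁ ∩ scEdges C₂).Nonempty := by
    rintro m hm (rfl | rfl)
    exacts [⟨_, mem_inter.2 ⟨hn₁, hm⟩⟩, ⟨_, mem_inter.2 ⟨hn₂, hm⟩⟩]
  by_cases h : m₁ = n₁ ∨ m₁ = n₂
  · exact shared m₁ hm₁ h
  rw [not_or] at h
  rcases eq_or_eq_or_eq_of_adj_of_degree_le_three (hsub v) hn (Ne.symm h.1) (Ne.symm h.2)
    hvn₁ hvn₂ hvm₁ hvm₂ with h' | h' | h'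
  · exact shared m₂ hm₂ (.inl h')
  · exact shared m₂ hm₂ (.inr h')
  · exact (hm h'.symm).elim

theorem scUnprob_of_card_inter_eq_one (w : Sym2 V → ℝ) {C : ShortCycle V} {x y z u : V}
    (hs : IsSquare4 G x y z u) (h : (scEdges C ∩ sqEdges x y z u).card = 1) :
    scUnprob G w C := by
  refine .inl ⟨x, y, z, u, hs, fun hC => ?_, h⟩
  rw [← hC, inter_self] at h
  obtain ⟨-, hxz, -⟩ := hs
  have := card_le_one.1 h.le s(x, y) (by simp [sqEdges]) s(y, z) (by simp [sqEdges])
  simp only [Sym2.eq_iff] at this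
  grind

end ShortCycles

section Problematic
variable [DecidableEq V] {G : SimpleGraph V} (w : Sym2 V → ℝ)

theorem scUnprob_or_scUnprob_of_tri_tri {a b c x y z : V} (h₁ : IsSC G (.tri a b c))
    (h₂ : IsSC G (.tri x y z)) (hne : scEdges (.tri a b c) ≠ scEdges (.tri x y z))
    (hshare : (scEdges (.tri a b c) ∩ scEdges (.tri x y z)).Nonempty) :
    scUnprob G w (.tri a b c) ∨ scUnprob G w (.tri x y z) := by
  have ⟨hab, hac, hbc, _⟩ := h₁
  have ⟨hxy, hxz, hyz, _⟩ := h₂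
  have hT : ({x, y, z} : Finset V) ≠ {a, b, c} := fun h => hne <| by
    rw [← triEdges_insert hab hac hbc, ← triEdges_insert hxy hxz hyz, h]
  rcases le_total (∑ e ∈ scEdges (.tri a b c), w e) (∑ e ∈ scEdges (.tri x y z), w e)
    with hle | hle
  · refine .inl (.inr ⟨{x, y, z}, h₂.isTriangle, hT, ?_, ?_⟩) <;>
      rwa [triEdges_insert hxy hxz hyz]
  · rw [← triEdges_insert hab hac hbc] at hle
    refine .inr (.inr ⟨{a, b, c}, h₁.isTriangle, hT.symm, ?_, hle⟩)
    rwa [triEdges_insert hab hac hbc, inter_comm]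

theorem scUnprob_or_scUnprob_of_sq_sq {a b c d x y z u : V} (h₁ : IsSquare4 G a b c d)
    (h₂ : IsSquare4 G x y z u) (hne : sqEdges a b c d ≠ sqEdges x y z u)
    (hshare : (sqEdges a b c d ∩ sqEdges x y z u).Nonempty) :
    scUnprob G w (.sq a b c d) ∨ scUnprob G w (.sq x y z u) := by
  have hpos := card_pos.2 hshare
  rcases (by omega : (sqEdges a b c d ∩ sqEdges x y z u).card = 1 ∨
      (sqEdges a b c d ∩ sqEdges x y z u).card = 2 ∨
      3 ≤ (sqEdges a b c d ∩ sqEdges x y z u).card) with h | h | h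
  · exact .inl (scUnprob_of_card_inter_eq_one w h₂ h)
  · rcases le_total (∑ e ∈ sqEdges a b c d, w e) (∑ e ∈ sqEdges x y z u, w e)
      with hle | hle
    · exact .inl (.inr ⟨x, y, z, u, h₂, hne.symm, h, hle⟩)
    · exact .inr (.inr ⟨a, b, c, d, h₁, hne, by rwa [inter_comm], hle⟩)
  · exact (hne (sqEdges_eq_of_three_le_card_inter h₁ h₂ h).symm).elim

theorem formsDoubleTriangle_of_tri_sq [G.LocallyFinite] (hsub : ∀ v : V, G.degree v ≤ 3)
    (hK4 : ¬ HasK4Component G) {a b c x y z u : V} (ht : IsSC G (.tri a b c))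
    (hs : IsSquare4 G x y z u) (hp : ¬ scUnprob G w (.tri a b c))
    (hshare : (scEdges (.tri a b c) ∩ sqEdges x y z u).Nonempty) :
    FormsDoubleTriangle G (scEdges (.tri a b c)) (sqEdges x y z u) := by
  have hpos := card_pos.2 hshare
  have hone : (scEdges (.tri a b c) ∩ sqEdges x y z u).card ≠ 1 :=
    fun h => hp (scUnprob_of_card_inter_eq_one w hs h)
  have htwo : 2 ≤ (scEdges (.tri a b c) ∩ sqEdges x y z u).card := by omega
  rcases two_consecutive_mem_of_two_le_card_inter htwo with
    ⟨hab, hbc⟩ | ⟨hbc, hca⟩ | ⟨hca, hab⟩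
  · rw [scEdges_tri_rotate]
    exact formsDoubleTriangle_of_mem_sqEdges hsub hK4 ht.tri_rotate hs hbc (Sym2.eq_swap ▸ hab)
  · rw [scEdges_tri_rotate, scEdges_tri_rotate]
    exact formsDoubleTriangle_of_mem_sqEdges hsub hK4 ht.tri_rotate.tri_rotate hs hca
      (Sym2.eq_swap ▸ hbc)
  · exact formsDoubleTriangle_of_mem_sqEdges hsub hK4 ht hs hab (Sym2.eq_swap ▸ hca)

end Problematic

/-- If `C₁` and `C₂` are two distinct problematic short
cycles of `G` that are not vertex-disjoint, then one of them is a triangle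
`t = (a,c,d)`, the other is the square `(a,c,b,d)`, they share exactly the
two edges `(a,c)` and `(a,d)`, and the subgraph of `G` induced on
`{a, b, c, d}` has edge set exactly `{(c,d), (a,c), (a,d), (b,c), (b,d)}`
(in particular `(a,b)` is not an edge of `G`): a double triangle. -/
theorem problematic_short_cycles_form_double_triangle {V : Type*} [Fintype V] [DecidableEq V]
    (G : SimpleGraph V) [DecidableRel G.Adj]
    (hsub : ∀ v : V, G.degree v ≤ 3) (hK4 : ¬ HasK4Component G)
    (w : Sym2 V → ℝ)
    (C₁ C₂ : ShortCycle V) (h₁ : IsSC G C₁) (h₂ : IsSC G C₂)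
    (hp₁ : ¬ scUnprob G w C₁) (hp₂ : ¬ scUnprob G w C₂)
    (hne : scEdges C₁ ≠ scEdges C₂)
    (hmeet : ¬ Disjoint (scVerts C₁) (scVerts C₂)) :
    ∃ a b c d : V, a ≠ b ∧ a ≠ c ∧ a ≠ d ∧ b ≠ c ∧ b ≠ d ∧ c ≠ d ∧
      G.Adj c d ∧ G.Adj a c ∧ G.Adj a d ∧ G.Adj b c ∧ G.Adj b d ∧ ¬ G.Adj a b ∧
      ((scEdges C₁ = {s(a, c), s(c, d), s(d, a)} ∧
        scEdges C₂ = {s(a, c), s(c, b), s(b, d), s(d, a)}) ∨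
       (scEdges C₂ = {s(a, c), s(c, d), s(d, a)} ∧
        scEdges C₁ = {s(a, c), s(c, b), s(b, d), s(d, a)})) ∧
      scEdges C₁ ∩ scEdges C₂ = {s(a, c), s(a, d)} := by
  have hshare := scEdges_inter_nonempty hsub h₁ h₂ hmeet
  rcases C₁ with ⟨a, b, c⟩ | ⟨a, b, c, d⟩ <;> rcases C₂ with ⟨x, y, z⟩ | ⟨x, y, z, u⟩
  · exact ((scUnprob_or_scUnprob_of_tri_tri w h₁ h₂ hne hshare).elim hp₁ hp₂).elim
  · obtain ⟨a, b, c, d, ⟨hab, hac, had, hbc, hbd, hcd, ecd, eac, ead, ebc, ebd, nab⟩,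
      hT, hS, hI⟩ := formsDoubleTriangle_of_tri_sq w hsub hK4 h₁ h₂ hp₁ hshare
    exact ⟨a, b, c, d, hab, hac, had, hbc, hbd, hcd, ecd, eac, ead, ebc, ebd, nab,
      .inl ⟨hT, hS⟩, hI⟩
  · rw [inter_comm] at hshare ⊢
    obtain ⟨a, b, c, d, ⟨hab, hac, had, hbc, hbd, hcd, ecd, eac, ead, ebc, ebd, nab⟩,
      hT, hS, hI⟩ := formsDoubleTriangle_of_tri_sq w hsub hK4 h₂ h₁ hp₂ hshare
    exact ⟨a, b, c, d, hab, hac, had, hbc, hbd, hcd, ecd, eac, ead, ebc, ebd, nab,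
      .inr ⟨hT, hS⟩, hI⟩
  · exact ((scUnprob_or_scUnprob_of_sq_sq w h₁ h₂ hne hshare).elim hp₁ hp₂).elim

end Paper
end
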